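/- arXiv:1810.09368 — 6 statements merged into one kernel-verified Lean document; each statement's English description precedes it below -/
import Mathlib

section
/- Let M, Q ≥ 1 be real numbers and let (z_m) be complex numbers indexed by integers m with M < m ≤ 2M. Then |∑_{M < m ≤ 2M} z_m|² ≤ (2 + M/Q) · ∑_{|q| < Q} (1 − |q|/Q) · ∑_{m : M < m+q ≤ 2M and M < m−q ≤ 2M} z_{m+q} · conj(z_{m−q}), where q ranges over integers with |q| < Q. -/
open Finset

/- auxiliary definitions -/
noncomputable def fiG (z : ℤ → ℂ) (A B m q : ℤ) : ℂ :=
  if m + q ∈ Finset.Ioc A B ∧ m - q ∈ Finset.Ioc A B then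
    z (m + q) * (starRingEnd ℂ) (z (m - q)) else 0

noncomputable def fiC (z : ℤ → ℂ) (A B t q : ℤ) : ℂ :=
  ∑ m ∈ Finset.Ioc (A - t) (B + t), fiG z A B m q

noncomputable def fiF (z : ℤ → ℂ) (A B n q : ℤ) : ℂ :=
  if n + 2*q ∈ Finset.Ioc A B then z (n + 2*q) else 0

noncomputable def fiA (z : ℤ → ℂ) (A B K n : ℤ) : ℂ :=
  ∑ q ∈ Finset.Icc 1 K, fiF z A B n q

lemma fiG_support {z : ℤ → ℂ} {A B m q : ℤ} (h : fiG z A B m q ≠ 0) :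
    m + q ∈ Finset.Ioc A B ∧ m - q ∈ Finset.Ioc A B := by
  by_contra hc
  exact h (if_neg hc)

/-- sum of fiG over any finset containing the support is fiC -/
lemma sum_fiG_eq (z : ℤ → ℂ) (A B t q : ℤ) (U : Finset ℤ)
    (hU : ∀ m, fiG z A B m q ≠ 0 → m ∈ U)
    (hV : ∀ m, fiG z A B m q ≠ 0 → m ∈ Finset.Ioc (A - t) (B + t)) :
    ∑ m ∈ U, fiG z A B m q = fiC z A B t q := by
  have h1 : ∑ m ∈ U, fiG z A B m q = ∑ m ∈ U ∪ Finset.Ioc (A - t) (B + t), fiG z A B m q :=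
    Finset.sum_subset Finset.subset_union_left
      (fun x _ hx => by by_contra hne; exact hx (hU x hne))
  have h2 : ∑ m ∈ Finset.Ioc (A - t) (B + t), fiG z A B m q
      = ∑ m ∈ U ∪ Finset.Ioc (A - t) (B + t), fiG z A B m q :=
    Finset.sum_subset Finset.subset_union_right
      (fun x _ hx => by by_contra hne; exact hx (hV x hne))
  rw [fiC, h1, h2]

/-- Lemma: shifted-sum identity -/
lemma fi_sumA (z : ℤ → ℂ) (A B K : ℤ) (hK : 1 ≤ K) :
    ∑ n ∈ Finset.Ioc (A - 2*K) (B - 2), fiA z A B K n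
      = (K : ℂ) * ∑ m ∈ Finset.Ioc A B, z m := by
  unfold fiA
  rw [Finset.sum_comm]
  have h : ∀ q ∈ Finset.Icc 1 K,
      ∑ n ∈ Finset.Ioc (A - 2*K) (B - 2), fiF z A B n q = ∑ m ∈ Finset.Ioc A B, z m := by
    intro q hq
    simp only [Finset.mem_Icc] at hq
    unfold fiF
    rw [← Finset.sum_filter]
    refine Finset.sum_nbij' (i := fun n => n + 2*q) (j := fun m => m - 2*q) ?_ ?_ ?_ ?_ ?_
    · intro a ha; simp only [Finset.mem_filter, Finset.mem_Ioc] at ha ⊢; omega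
    · intro a ha; simp only [Finset.mem_filter, Finset.mem_Ioc] at ha ⊢; omega
    · intro a ha; omega
    · intro a ha; omega
    · intro a ha; rfl
  rw [Finset.sum_congr rfl h, Finset.sum_const, Int.card_Icc]
  have : ((K + 1 - 1).toNat : ℂ) = (K : ℂ) := by
    have h0 : ((K + 1 - 1).toNat : ℤ) = K := by omega
    exact_mod_cast h0
  rw [nsmul_eq_mul, this]

/-- cell identity -/
lemma fi_cell (z : ℤ → ℂ) (A B t K q1 q2 : ℤ) (hK : K ≤ t)
    (hq1 : q1 ∈ Finset.Icc 1 K) (hq2 : q2 ∈ Finset.Icc 1 K) :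
    ∑ n ∈ Finset.Ioc (A - 2*K) (B - 2), fiF z A B n q1 * (starRingEnd ℂ) (fiF z A B n q2)
      = fiC z A B t (q1 - q2) := by
  simp only [Finset.mem_Icc] at hq1 hq2
  have hpt : ∀ n : ℤ, fiF z A B n q1 * (starRingEnd ℂ) (fiF z A B n q2)
      = fiG z A B (n + q1 + q2) (q1 - q2) := by
    intro n
    unfold fiF fiG
    have e1 : n + q1 + q2 + (q1 - q2) = n + 2*q1 := by ring
    have e2 : n + q1 + q2 - (q1 - q2) = n + 2*q2 := by ring
    rw [e1, e2]
    by_cases h1 : n + 2*q1 ∈ Finset.Ioc A B <;> by_cases h2 : n + 2*q2 ∈ Finset.Ioc A B <;>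
      simp [h1, h2]
  rw [Finset.sum_congr rfl (fun n _ => hpt n)]
  have hshift : ∑ n ∈ Finset.Ioc (A - 2*K) (B - 2), fiG z A B (n + q1 + q2) (q1 - q2)
      = ∑ m ∈ Finset.Ioc (A - 2*K + (q1 + q2)) (B - 2 + (q1 + q2)), fiG z A B m (q1 - q2) := by
    refine Finset.sum_nbij' (i := fun n => n + (q1 + q2)) (j := fun m => m - (q1 + q2)) ?_ ?_ ?_ ?_ ?_
    · intro a ha; simp only [Finset.mem_Ioc] at ha ⊢; omega
    · intro a ha; simp only [Finset.mem_Ioc] at ha ⊢; omega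
    · intro a ha; omega
    · intro a ha; omega
    · intro a ha
      have e : a + q1 + q2 = a + (q1 + q2) := by ring
      rw [e]
  rw [hshift]
  refine sum_fiG_eq z A B t (q1 - q2) _ ?_ ?_
  · intro m hm
    have h := fiG_support hm
    simp only [Finset.mem_Ioc] at h ⊢
    omega
  · intro m hm
    have h := fiG_support hm
    simp only [Finset.mem_Ioc] at h ⊢
    omega

/-- fiber card -/
lemma fi_fiber_card (K j : ℤ) (hj : j ∈ Finset.Ioo (-K) K) :
    ((Finset.Icc 1 K ×ˢ Finset.Icc 1 K).filter (fun p => p.1 - p.2 = j)).card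
      = (K - |j|).toNat := by
  simp only [Finset.mem_Ioo] at hj
  rw [Finset.card_bij' (i := fun p _ => p.2)
    (j := fun x _ => (x + j, x))
    (hi := ?_) (hj := ?_) (left_inv := ?_) (right_inv := ?_)
    (t := Finset.Icc (max 1 (1 - j)) (min K (K - j)))]
  · rw [Int.card_Icc]
    rcases le_or_gt 0 j with h | h
    · rw [abs_of_nonneg h]; omega
    · rw [abs_of_neg h]; omega
  · intro p hp
    simp only [Finset.mem_filter, Finset.mem_product, Finset.mem_Icc] at hp ⊢
    omega
  · intro x hx
    simp only [Finset.mem_filter, Finset.mem_product, Finset.mem_Icc] at hx ⊢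
    omega
  · intro p hp
    simp only [Finset.mem_filter, Finset.mem_product, Finset.mem_Icc] at hp
    obtain ⟨-, h⟩ := hp
    simp [← h]
  · intro x hx; rfl

/-- expansion of sum of squares -/
lemma fi_sumSq (z : ℤ → ℂ) (A B t K : ℤ) (hK : 1 ≤ K) (hKt : K ≤ t) :
    ∑ n ∈ Finset.Ioc (A - 2*K) (B - 2), ‖fiA z A B K n‖^2
      = (∑ q ∈ Finset.Ioo (-K) K, ((K - |q| : ℤ) : ℂ) * fiC z A B t q).re := by
  have hnorm : ∀ w : ℂ, ‖w‖^2 = (w * (starRingEnd ℂ) w).re := by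
    intro w
    simp [Complex.mul_conj, ← Complex.normSq_eq_norm_sq]
  have step1 : ∑ n ∈ Finset.Ioc (A - 2*K) (B - 2), ‖fiA z A B K n‖^2
      = (∑ n ∈ Finset.Ioc (A - 2*K) (B - 2), fiA z A B K n * (starRingEnd ℂ) (fiA z A B K n)).re := by
    rw [Complex.re_sum]
    exact Finset.sum_congr rfl (fun n _ => hnorm _)
  rw [step1]
  congr 1
  have step2 : ∀ n, fiA z A B K n * (starRingEnd ℂ) (fiA z A B K n)
      = ∑ q1 ∈ Finset.Icc 1 K, ∑ q2 ∈ Finset.Icc 1 K,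
          fiF z A B n q1 * (starRingEnd ℂ) (fiF z A B n q2) := by
    intro n
    unfold fiA
    rw [map_sum, Finset.sum_mul_sum]
  rw [Finset.sum_congr rfl (fun n _ => step2 n)]
  rw [Finset.sum_comm]
  have step3 : ∀ q1 ∈ Finset.Icc 1 K,
      ∑ n ∈ Finset.Ioc (A - 2*K) (B - 2), ∑ q2 ∈ Finset.Icc 1 K,
          fiF z A B n q1 * (starRingEnd ℂ) (fiF z A B n q2)
      = ∑ q2 ∈ Finset.Icc 1 K, fiC z A B t (q1 - q2) := by
    intro q1 hq1
    rw [Finset.sum_comm]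
    exact Finset.sum_congr rfl (fun q2 hq2 => fi_cell z A B t K q1 q2 hKt hq1 hq2)
  rw [Finset.sum_congr rfl step3]
  rw [← Finset.sum_product']
  have hmaps : ∀ p ∈ Finset.Icc (1:ℤ) K ×ˢ Finset.Icc (1:ℤ) K,
      p.1 - p.2 ∈ Finset.Ioo (-K) K := by
    intro p hp
    simp only [Finset.mem_product, Finset.mem_Icc] at hp
    simp only [Finset.mem_Ioo]
    omega
  rw [← Finset.sum_fiberwise_of_maps_to' hmaps (fiC z A B t)]
  refine Finset.sum_congr rfl (fun q hq => ?_)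
  rw [Finset.sum_const, fi_fiber_card K q hq, nsmul_eq_mul]
  congr 1
  have h0 : (0:ℤ) ≤ K - |q| := by
    simp only [Finset.mem_Ioo] at hq
    rcases le_or_gt 0 q with h | h
    · rw [abs_of_nonneg h]; omega
    · rw [abs_of_neg h]; omega
  have h1 : ((K - |q|).toNat : ℤ) = K - |q| := Int.toNat_of_nonneg h0
  exact_mod_cast h1

/-- Cauchy-Schwarz chain for a single K -/
lemma fi_mainK (z : ℤ → ℂ) (A B t K : ℤ) (hK : 1 ≤ K) (hKt : K ≤ t) (hAB : A + 1 ≤ B) :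
    ((K:ℝ))^2 * ‖∑ m ∈ Finset.Ioc A B, z m‖^2
      ≤ ((B - A + 2*K - 2 : ℤ) : ℝ) *
        (∑ q ∈ Finset.Ioo (-K) K, ((K - |q| : ℤ) : ℂ) * fiC z A B t q).re := by
  rw [← fi_sumSq z A B t K hK hKt]
  have hcard : ((Finset.Ioc (A - 2*K) (B - 2)).card : ℝ) = ((B - A + 2*K - 2 : ℤ) : ℝ) := by
    rw [Int.card_Ioc]
    have h0 : ((B - 2 - (A - 2*K)).toNat : ℤ) = B - A + 2*K - 2 := by omega
    exact_mod_cast h0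
  have hCS : ‖∑ n ∈ Finset.Ioc (A - 2*K) (B - 2), fiA z A B K n‖^2
      ≤ ((Finset.Ioc (A - 2*K) (B - 2)).card : ℝ)
        * ∑ n ∈ Finset.Ioc (A - 2*K) (B - 2), ‖fiA z A B K n‖^2 := by
    calc ‖∑ n ∈ Finset.Ioc (A - 2*K) (B - 2), fiA z A B K n‖^2
        ≤ (∑ n ∈ Finset.Ioc (A - 2*K) (B - 2), ‖fiA z A B K n‖)^2 := by
          exact pow_le_pow_left₀ (norm_nonneg _) (norm_sum_le _ _) 2
      _ ≤ _ := sq_sum_le_card_mul_sum_sq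
  rw [fi_sumA z A B K hK] at hCS
  have hnk : ‖(K:ℂ) * ∑ m ∈ Finset.Ioc A B, z m‖^2
      = (K:ℝ)^2 * ‖∑ m ∈ Finset.Ioc A B, z m‖^2 := by
    rw [norm_mul, mul_pow, Complex.norm_intCast, sq_abs]
  rw [hnk] at hCS
  calc (K:ℝ)^2 * ‖∑ m ∈ Finset.Ioc A B, z m‖^2 ≤ _ := hCS
    _ = ((B - A + 2*K - 2 : ℤ) : ℝ)
        * ∑ n ∈ Finset.Ioc (A - 2*K) (B - 2), ‖fiA z A B K n‖^2 := by rw [hcard]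

/-- scalar key inequality -/
lemma fi_key (M Q d τ : ℝ) (hM : 1 ≤ M) (hQ : 1 ≤ Q) (ht : 2 ≤ τ) (h1 : τ - 1 ≤ Q)
    (h2 : Q ≤ τ) (hd1 : 1 ≤ d) (hd2 : d ≤ M + 1) :
    Q^2*((d+2*τ-4)*(d+2*τ-2)) ≤
      (2*Q+M)*((τ-Q)*(τ-1)^2*(d+2*τ-2) + (Q-τ+1)*τ^2*(d+2*τ-4)) := by
  have hH : 0 ≤ 2*τ^2+2*M*τ-4*τ-M+1 := by nlinarith
  have hE1 : 0 ≤ (2*Q+M)*((τ-Q)*(τ-1)^2*(1+2*τ-2) + (Q-τ+1)*τ^2*(1+2*τ-4))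
      - Q^2*((1+2*τ-4)*(1+2*τ-2)) := by
    have p1 : 0 ≤ (1+M)*((τ-1)^2*(2*τ-1)) :=
      mul_nonneg (by linarith) (mul_nonneg (sq_nonneg _) (by linarith))
    have p2 : 0 ≤ M*((1+Q-τ)*(2*τ^2-4*τ+1)) :=
      mul_nonneg (by linarith) (mul_nonneg (by linarith) (by nlinarith))
    have p3 : 0 ≤ 2*τ*((τ-2)*(1+Q-τ)) :=
      mul_nonneg (by linarith) (mul_nonneg (by linarith) (by linarith))
    have p4 : 0 ≤ (1+Q-τ)*(1+τ-Q) := mul_nonneg (by linarith) (by linarith)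
    nlinarith [p1, p2, p3, p4]
  have hEM : 0 ≤ (2*Q+M)*((τ-Q)*(τ-1)^2*((M+1)+2*τ-2) + (Q-τ+1)*τ^2*((M+1)+2*τ-4))
      - Q^2*(((M+1)+2*τ-4)*((M+1)+2*τ-2)) := by
    have p1 : 0 ≤ (τ-1)^2*(M+2*τ-1) := mul_nonneg (sq_nonneg _) (by linarith)
    have p2 : 0 ≤ (τ-Q)*((1+Q-τ)*(M-1)^2) :=
      mul_nonneg (by linarith) (mul_nonneg (by linarith) (sq_nonneg _))
    have p3 : 0 ≤ (1+Q-τ)*(2*τ^2+2*M*τ-4*τ-M+1) := mul_nonneg (by linarith) hH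
    nlinarith [p1, p2, p3]
  have hMG : 0 ≤ M * ((2*Q+M)*((τ-Q)*(τ-1)^2*(d+2*τ-2) + (Q-τ+1)*τ^2*(d+2*τ-4))
      - Q^2*((d+2*τ-4)*(d+2*τ-2))) := by
    have hcomb : M * ((2*Q+M)*((τ-Q)*(τ-1)^2*(d+2*τ-2) + (Q-τ+1)*τ^2*(d+2*τ-4))
        - Q^2*((d+2*τ-4)*(d+2*τ-2)))
      = (M+1-d) * ((2*Q+M)*((τ-Q)*(τ-1)^2*(1+2*τ-2) + (Q-τ+1)*τ^2*(1+2*τ-4))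
          - Q^2*((1+2*τ-4)*(1+2*τ-2)))
        + (d-1) * ((2*Q+M)*((τ-Q)*(τ-1)^2*((M+1)+2*τ-2) + (Q-τ+1)*τ^2*((M+1)+2*τ-4))
          - Q^2*(((M+1)+2*τ-4)*((M+1)+2*τ-2)))
        + M*Q^2*((d-1)*(M+1-d)) := by ring
    rw [hcomb]
    have t1 : 0 ≤ (M+1-d) * ((2*Q+M)*((τ-Q)*(τ-1)^2*(1+2*τ-2) + (Q-τ+1)*τ^2*(1+2*τ-4))
          - Q^2*((1+2*τ-4)*(1+2*τ-2))) := mul_nonneg (by linarith) hE1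
    have t2 : 0 ≤ (d-1) * ((2*Q+M)*((τ-Q)*(τ-1)^2*((M+1)+2*τ-2) + (Q-τ+1)*τ^2*((M+1)+2*τ-4))
          - Q^2*(((M+1)+2*τ-4)*((M+1)+2*τ-2))) := mul_nonneg (by linarith) hEM
    have t3 : 0 ≤ M*Q^2*((d-1)*(M+1-d)) :=
      mul_nonneg (mul_nonneg (by linarith) (sq_nonneg Q))
        (mul_nonneg (by linarith) (by linarith))
    linarith
  nlinarith [hMG, hM]

lemma fi_Ppos (z : ℤ → ℂ) (A B t K : ℤ) (hK : 1 ≤ K) (hKt : K ≤ t) :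
    0 ≤ (∑ q ∈ Finset.Ioo (-K) K, ((K - |q| : ℤ) : ℂ) * fiC z A B t q).re := by
  rw [← fi_sumSq z A B t K hK hKt]
  exact Finset.sum_nonneg (fun n _ => sq_nonneg _)

lemma re_int_mul (k : ℤ) (w : ℂ) : ((k:ℂ) * w).re = (k:ℝ) * w.re := by
  rw [show ((k:ℂ)) = (((k:ℝ)):ℂ) by push_cast; rfl]
  simp

set_option maxHeartbeats 1000000 in
/-- Fouvry–Iwaniec shifted differencing (Weyl–van der Corput) inequality. -/
theorem stmt_1 (M Q : ℝ) (hM : 1 ≤ M) (hQ : 1 ≤ Q) (z : ℤ → ℂ) :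
    ‖∑ m ∈ Finset.Ioc ⌊M⌋ ⌊2 * M⌋, z m‖ ^ 2 ≤
      ((2 + M / Q) *
        ∑ q ∈ Finset.Ioo (-⌈Q⌉) ⌈Q⌉, ((1 - |(q : ℝ)| / Q) *
          ∑ m ∈ (Finset.Ioc (⌊M⌋ - ⌈Q⌉) (⌊2 * M⌋ + ⌈Q⌉)).filter
              (fun m => m + q ∈ Finset.Ioc ⌊M⌋ ⌊2 * M⌋ ∧ m - q ∈ Finset.Ioc ⌊M⌋ ⌊2 * M⌋),
            z (m + q) * starRingEnd ℂ (z (m - q)))).re := by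
  have hQ0 : (0:ℝ) < Q := by linarith
  set A := ⌊M⌋ with hAdef
  set B := ⌊2 * M⌋ with hBdef
  set t := ⌈Q⌉ with htdef
  have htQ : Q ≤ (t:ℝ) := Int.le_ceil Q
  have htQ' : (t:ℝ) < Q + 1 := Int.ceil_lt_add_one Q
  have ht1 : 1 ≤ t := Int.ceil_pos.mpr hQ0
  have hAr : (A:ℝ) ≤ M := Int.floor_le M
  have hAr' : M - 1 < (A:ℝ) := Int.sub_one_lt_floor M
  have hBr : (B:ℝ) ≤ 2*M := Int.floor_le _
  have hBr' : 2*M - 1 < (B:ℝ) := Int.sub_one_lt_floor _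
  have hABr : (A:ℝ) < (B:ℝ) := by linarith
  have hAB : A + 1 ≤ B := by
    have : A < B := by exact_mod_cast hABr
    omega
  have hd1 : 1 ≤ (B:ℝ) - (A:ℝ) := by
    have : ((A:ℝ)) + 1 ≤ (B:ℝ) := by exact_mod_cast hAB
    linarith
  have hd2 : (B:ℝ) - (A:ℝ) ≤ M + 1 := by linarith
  -- identify inner sums
  have hin : ∀ q : ℤ, (∑ m ∈ (Finset.Ioc (A - t) (B + t)).filter
      (fun m => m + q ∈ Finset.Ioc A B ∧ m - q ∈ Finset.Ioc A B),
        z (m + q) * starRingEnd ℂ (z (m - q))) = fiC z A B t q := by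
    intro q
    rw [fiC, Finset.sum_filter]
    rfl
  have hre : ∀ (x : ℝ) (w : ℂ), ((x:ℂ) * w).re = x * w.re := fun x w => by simp
  set r : ℤ → ℝ := fun q => (fiC z A B t q).re with hrdef
  set s2 := ‖∑ m ∈ Finset.Ioc A B, z m‖^2 with hs2def
  set R1 := ∑ q ∈ Finset.Ioo (-(t-1)) (t-1), (((t-1) - |q| : ℤ) : ℝ) * r q with hR1def
  set R2 := ∑ q ∈ Finset.Ioo (-t) t, ((t - |q| : ℤ) : ℝ) * r q with hR2def
  have hRHS : ((2 + M / Q) *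
        ∑ q ∈ Finset.Ioo (-t) t, ((1 - |(q : ℝ)| / Q) *
          ∑ m ∈ (Finset.Ioc (A - t) (B + t)).filter
              (fun m => m + q ∈ Finset.Ioc A B ∧ m - q ∈ Finset.Ioc A B),
            z (m + q) * starRingEnd ℂ (z (m - q)))).re
      = (2 + M/Q) * ∑ q ∈ Finset.Ioo (-t) t, (1 - |(q:ℝ)|/Q) * r q := by
    simp only [hin]
    have e1 : ∀ q:ℤ, (1 - ((|(q:ℝ)| : ℝ) : ℂ) / ((Q:ℝ):ℂ)) * fiC z A B t q
        = (((1 - |(q:ℝ)|/Q : ℝ)):ℂ) * fiC z A B t q := by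
      intro q; push_cast; ring
    rw [Finset.sum_congr rfl (fun q _ => e1 q)]
    have e2 : ((2:ℂ) + ((M:ℝ):ℂ)/((Q:ℝ):ℂ)) = (((2 + M/Q : ℝ)):ℂ) := by push_cast; ring
    rw [e2, hre, Complex.re_sum]
    congr 1
    exact Finset.sum_congr rfl fun q _ => hre _ _
  rw [hRHS]
  -- the two quadratic-form sums
  have hRe2 : (∑ q ∈ Finset.Ioo (-t) t, ((t - |q| : ℤ) : ℂ) * fiC z A B t q).re = R2 := by
    rw [hR2def, Complex.re_sum]
    exact Finset.sum_congr rfl fun q _ => re_int_mul _ _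
  have hRe1 : (∑ q ∈ Finset.Ioo (-(t-1)) (t-1), (((t-1) - |q| : ℤ) : ℂ) * fiC z A B t q).re
      = R1 := by
    rw [hR1def, Complex.re_sum]
    exact Finset.sum_congr rfl fun q _ => re_int_mul _ _
  have hb2 := fi_mainK z A B t t ht1 le_rfl hAB
  rw [hRe2, ← hs2def] at hb2
  have hp2 := fi_Ppos z A B t t ht1 le_rfl
  rw [hRe2] at hp2
  have hb2' : ((t:ℝ))^2 * s2 ≤ ((B:ℝ) - (A:ℝ) + 2*(t:ℝ) - 2) * R2 := by
    have e : ((B - A + 2*t - 2 : ℤ) : ℝ) = (B:ℝ) - (A:ℝ) + 2*(t:ℝ) - 2 := by push_cast; ring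
    rw [e] at hb2
    exact hb2
  -- the splitting identity
  have hsplit : (2 + M/Q) * ∑ q ∈ Finset.Ioo (-t) t, (1 - |(q:ℝ)|/Q) * r q
      = ((2*Q+M)*((t:ℝ)-Q)/Q^2) * R1 + ((2*Q+M)*(Q-(t:ℝ)+1)/Q^2) * R2 := by
    rw [hR1def, hR2def]
    have hext : (∑ q ∈ Finset.Ioo (-(t-1)) (t-1), (((t-1) - |q| : ℤ) : ℝ) * r q)
        = ∑ q ∈ Finset.Ioo (-t) t, (((t-1) - |q| : ℤ) : ℝ) * r q := by
      apply Finset.sum_subset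
      · apply Finset.Ioo_subset_Ioo <;> omega
      · intro x hx hnx
        simp only [Finset.mem_Ioo] at hx hnx
        have hz : (t-1) - |x| = 0 := by
          rcases le_or_gt 0 x with h|h
          · rw [abs_of_nonneg h]; omega
          · rw [abs_of_neg h]; omega
        rw [hz]
        simp
    rw [hext, Finset.mul_sum, Finset.mul_sum, Finset.mul_sum, ← Finset.sum_add_distrib]
    apply Finset.sum_congr rfl
    intro q hq
    have hq' : |(q:ℝ)| = ((|q| : ℤ) : ℝ) := by push_cast; rfl
    rw [hq']
    push_cast
    field_simp
    ring
  rw [hsplit]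
  have hs2 : (0:ℝ) ≤ s2 := by rw [hs2def]; positivity
  have hQ2 : (0:ℝ) < Q^2 := by positivity
  rcases eq_or_lt_of_le ht1 with h1t | h1t
  · -- t = 1, so Q = 1
    have hτ1 : ((t:ℤ):ℝ) = 1 := by exact_mod_cast h1t.symm
    have hQ1 : Q = 1 := le_antisymm (by rw [← hτ1]; exact htQ) hQ
    have hR1 : R1 = 0 := by
      rw [hR1def, show (t - 1 : ℤ) = 0 by omega]
      simp
    rw [hτ1] at hb2'
    rw [hR1, mul_zero, zero_add, hQ1, hτ1]
    norm_num at hb2' ⊢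
    nlinarith [hb2', hp2, hd2, hs2, mul_le_mul_of_nonneg_right hd2 hp2]
  · -- 2 ≤ t
    have hτ2 : (2:ℝ) ≤ (t:ℝ) := by exact_mod_cast h1t
    have ht2 : (1:ℤ) ≤ t - 1 := by omega
    have hb1 := fi_mainK z A B t (t-1) ht2 (by omega) hAB
    rw [hRe1, ← hs2def] at hb1
    have hp1 := fi_Ppos z A B t (t-1) ht2 (by omega)
    rw [hRe1] at hp1
    have hb1' : ((t:ℝ)-1)^2 * s2 ≤ ((B:ℝ) - (A:ℝ) + 2*(t:ℝ) - 4) * R1 := by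
      have e1 : (((t-1:ℤ)):ℝ)^2 = ((t:ℝ)-1)^2 := by push_cast; ring
      have e2 : ((B - A + 2*(t-1) - 2 : ℤ) : ℝ) = (B:ℝ) - (A:ℝ) + 2*(t:ℝ) - 4 := by
        push_cast; ring
      rw [e1, e2] at hb1
      exact hb1
    have hkey := fi_key M Q ((B:ℝ) - (A:ℝ)) ((t:ℝ)) hM hQ hτ2 (by linarith) htQ hd1 hd2
    have hN1 : (0:ℝ) < (B:ℝ) - (A:ℝ) + 2*(t:ℝ) - 4 := by linarith
    have hN2 : (0:ℝ) < (B:ℝ) - (A:ℝ) + 2*(t:ℝ) - 2 := by linarith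
    have hν1 : (0:ℝ) ≤ (2*Q+M)*((t:ℝ)-Q) := mul_nonneg (by linarith) (by linarith)
    have hν2 : (0:ℝ) ≤ (2*Q+M)*(Q-(t:ℝ)+1) := mul_nonneg (by linarith) (by linarith)
    have hstep : ((B:ℝ) - (A:ℝ) + 2*(t:ℝ) - 4) * (((B:ℝ) - (A:ℝ) + 2*(t:ℝ) - 2)
          * (Q^2 * s2))
        ≤ ((B:ℝ) - (A:ℝ) + 2*(t:ℝ) - 4) * (((B:ℝ) - (A:ℝ) + 2*(t:ℝ) - 2)
          * ((2*Q+M)*((t:ℝ)-Q) * R1 + (2*Q+M)*(Q-(t:ℝ)+1) * R2)) := by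
      nlinarith [mul_le_mul_of_nonneg_right hkey hs2,
        mul_le_mul_of_nonneg_left hb1' (mul_nonneg hν1 hN2.le),
        mul_le_mul_of_nonneg_left hb2' (mul_nonneg hν2 hN1.le)]
    have hstep2 : Q^2 * s2
        ≤ (2*Q+M)*((t:ℝ)-Q) * R1 + (2*Q+M)*(Q-(t:ℝ)+1) * R2 := by
      exact le_of_mul_le_mul_left (le_of_mul_le_mul_left hstep hN1) hN2
    rw [div_mul_eq_mul_div, div_mul_eq_mul_div, ← add_div, le_div_iff₀ hQ2]
    linarith [hstep2]
end

section
/- Let Ω₁ ⊆ ℝᵐ and Ω₂ ⊆ ℝⁿ be measurable sets, c ∈ L²(Ω₁, ℂ), ξ ∈ L²(Ω₂, ℂ), and let ω be a measurable complex-valued function on Ω₁ × Ω₂ such that sup_{x ∈ Ω₁} ∫_{Ω₂} |ω(x,y)| dy < ∞ and sup_{y ∈ Ω₂} ∫_{Ω₁} |ω(x,y)| dx < ∞. Then |∫_{Ω₁} c(x) ⟨ξ, ω(x,·)⟩₂ dx| ≤ ‖ξ‖₂ · ‖c‖₁ · (sup_{x' ∈ Ω₁} ∫_{Ω₁} |⟨ω(x,·),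 ω(x',·)⟩₂| dx)^{1/2}, where ⟨f,g⟩₂ = ∫_{Ω₂} f(y) · conj(g(y)) dy and ‖f‖_j denotes the L²(Ω_j) norm. -/
open MeasureTheory ComplexConjugate Function
open scoped ENNReal NNReal

private lemma mul_le_sq_add_sq' (a b : ℝ≥0∞) : a * b ≤ a ^ 2 + b ^ 2 := by
  rcases le_total a b with h | h
  · calc a * b ≤ b * b := mul_le_mul_left h b
      _ = b ^ 2 := (sq b).symm
      _ ≤ a ^ 2 + b ^ 2 := self_le_add_left _ _
  · calc a * b ≤ a * a := mul_le_mul_right h a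
      _ = a ^ 2 := (sq a).symm
      _ ≤ a ^ 2 + b ^ 2 := self_le_add_right _ _

private theorem key {α β : Type*} [MeasurableSpace α] [MeasurableSpace β]
    {μ : Measure α} {ν : Measure β} [SFinite μ] [SFinite ν]
    (c : α → ℂ) (ξ : β → ℂ) (ω : α → β → ℂ)
    (hc : MemLp c 2 μ) (hξ : MemLp ξ 2 ν)
    (hω : Measurable (Function.uncurry ω))
    (C₁ C₂ B : ℝ)
    (h₁ : ∀ᵐ x ∂μ, Integrable (fun y => ω x y) ν ∧ (∫ y, ‖ω x y‖ ∂ν) ≤ C₁ ∧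
        (∫ x', ‖∫ y, ω x' y * conj (ω x y) ∂ν‖ ∂μ) ≤ B)
    (h₂ : ∀ᵐ y ∂ν, Integrable (fun x => ω x y) μ ∧ (∫ x, ‖ω x y‖ ∂μ) ≤ C₂) :
    ‖∫ x, (c x * ∫ y, ξ y * conj (ω x y) ∂ν) ∂μ‖ ≤
      (∫ y, ‖ξ y‖ ^ 2 ∂ν).sqrt * (∫ x, ‖c x‖ ^ 2 ∂μ).sqrt * B.sqrt := by
  by_cases hμ0 : μ = 0
  · simp only [hμ0, integral_zero_measure, norm_zero]
    positivity
  haveI : (MeasureTheory.ae μ).NeBot := ae_neBot.2 hμ0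
  obtain ⟨x₀, hx₀⟩ := h₁.exists
  have hB0 : 0 ≤ B := le_trans (integral_nonneg fun x => norm_nonneg _) hx₀.2.2
  -- basic measurability and integrability facts
  have hωm : Measurable fun p : α × β => ω p.1 p.2 := hω
  have hconj : Measurable (starRingEnd ℂ) := Complex.continuous_conj.measurable
  have hcm : AEStronglyMeasurable c μ := hc.aestronglyMeasurable
  have hξm : AEStronglyMeasurable ξ ν := hξ.aestronglyMeasurable
  have hc2 : Integrable (fun x => ‖c x‖ ^ 2) μ := hc.norm.integrable_sq
  have hξ2 : Integrable (fun y => ‖ξ y‖ ^ 2) ν := hξ.norm.integrable_sq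
  have hc2' : (∫⁻ x, (‖c x‖₊ : ℝ≥0∞) ^ 2 ∂μ) < ⊤ := by
    have heq : ∀ x : α, ((‖c x‖₊ : ℝ≥0∞) ^ 2) = ((‖(‖c x‖ ^ 2 : ℝ)‖₊ : ℝ≥0∞)) := fun x => by
      rw [nnnorm_pow, nnnorm_norm, ENNReal.coe_pow]
    calc ∫⁻ x, (‖c x‖₊ : ℝ≥0∞) ^ 2 ∂μ = ∫⁻ x, (‖(‖c x‖ ^ 2 : ℝ)‖₊ : ℝ≥0∞) ∂μ :=
          lintegral_congr heq
      _ < ⊤ := hc2.2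
  have hξ2' : (∫⁻ y, (‖ξ y‖₊ : ℝ≥0∞) ^ 2 ∂ν) < ⊤ := by
    have heq : ∀ y : β, ((‖ξ y‖₊ : ℝ≥0∞) ^ 2) = ((‖(‖ξ y‖ ^ 2 : ℝ)‖₊ : ℝ≥0∞)) := fun y => by
      rw [nnnorm_pow, nnnorm_norm, ENNReal.coe_pow]
    calc ∫⁻ y, (‖ξ y‖₊ : ℝ≥0∞) ^ 2 ∂ν = ∫⁻ y, (‖(‖ξ y‖ ^ 2 : ℝ)‖₊ : ℝ≥0∞) ∂ν :=
          lintegral_congr heq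
      _ < ⊤ := hξ2.2
  have hrow : ∀ᵐ x ∂μ, (∫⁻ y, (‖ω x y‖₊ : ℝ≥0∞) ∂ν) ≤ ENNReal.ofReal C₁ :=
    h₁.mono fun x hx => by
      simp only [← enorm_eq_nnnorm]
      rw [← ofReal_integral_norm_eq_lintegral_enorm hx.1]
      exact ENNReal.ofReal_le_ofReal hx.2.1
  have hcol : ∀ᵐ y ∂ν, (∫⁻ x, (‖ω x y‖₊ : ℝ≥0∞) ∂μ) ≤ ENNReal.ofReal C₂ :=
    h₂.mono fun y hy => by
      simp only [← enorm_eq_nnnorm]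
      rw [← ofReal_integral_norm_eq_lintegral_enorm hy.1]
      exact ENNReal.ofReal_le_ofReal hy.2
  -- the kernel-product estimates
  have hKK : ∀ x, (∫⁻ y, (‖ω x y‖₊ : ℝ≥0∞) ∂ν) ≤ ENNReal.ofReal C₁ →
      (∫⁻ x', ∫⁻ y, (‖ω x y‖₊ : ℝ≥0∞) * (‖ω x' y‖₊ : ℝ≥0∞) ∂ν ∂μ) ≤
        ENNReal.ofReal C₁ * ENNReal.ofReal C₂ := by
    intro x hx
    rw [lintegral_lintegral_swap
      (((hω.comp (measurable_const.prodMk measurable_snd)).enorm.mul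
        hωm.enorm).aemeasurable)]
    calc ∫⁻ y, ∫⁻ x', (‖ω x y‖₊ : ℝ≥0∞) * (‖ω x' y‖₊ : ℝ≥0∞) ∂μ ∂ν
        = ∫⁻ y, (‖ω x y‖₊ : ℝ≥0∞) * ∫⁻ x', (‖ω x' y‖₊ : ℝ≥0∞) ∂μ ∂ν :=
          lintegral_congr fun y => lintegral_const_mul' _ _ ENNReal.coe_ne_top
      _ ≤ ∫⁻ y, (‖ω x y‖₊ : ℝ≥0∞) * ENNReal.ofReal C₂ ∂ν :=
          lintegral_mono_ae (hcol.mono fun y hy => mul_le_mul_right hy _)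
      _ = (∫⁻ y, (‖ω x y‖₊ : ℝ≥0∞) ∂ν) * ENNReal.ofReal C₂ :=
          lintegral_mul_const' _ _ ENNReal.ofReal_ne_top
      _ ≤ ENNReal.ofReal C₁ * ENNReal.ofReal C₂ := mul_le_mul_left hx _
  have hKK' : ∀ x', (∫⁻ y, (‖ω x' y‖₊ : ℝ≥0∞) ∂ν) ≤ ENNReal.ofReal C₁ →
      (∫⁻ x, ∫⁻ y, (‖ω x y‖₊ : ℝ≥0∞) * (‖ω x' y‖₊ : ℝ≥0∞) ∂ν ∂μ) ≤
        ENNReal.ofReal C₁ * ENNReal.ofReal C₂ := by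
    intro x' hx'
    rw [lintegral_lintegral_swap
      ((hωm.enorm.mul
        ((hω.comp (measurable_const.prodMk measurable_snd)).enorm)).aemeasurable)]
    calc ∫⁻ y, ∫⁻ x, (‖ω x y‖₊ : ℝ≥0∞) * (‖ω x' y‖₊ : ℝ≥0∞) ∂μ ∂ν
        = ∫⁻ y, (∫⁻ x, (‖ω x y‖₊ : ℝ≥0∞) ∂μ) * (‖ω x' y‖₊ : ℝ≥0∞) ∂ν :=
          lintegral_congr fun y => lintegral_mul_const' _ _ ENNReal.coe_ne_top
      _ ≤ ∫⁻ y, ENNReal.ofReal C₂ * (‖ω x' y‖₊ : ℝ≥0∞) ∂ν :=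
          lintegral_mono_ae (hcol.mono fun y hy => mul_le_mul_left hy _)
      _ = ENNReal.ofReal C₂ * ∫⁻ y, (‖ω x' y‖₊ : ℝ≥0∞) ∂ν :=
          lintegral_const_mul' _ _ ENNReal.ofReal_ne_top
      _ ≤ ENNReal.ofReal C₂ * ENNReal.ofReal C₁ := mul_le_mul_right hx' _
      _ = ENNReal.ofReal C₁ * ENNReal.ofReal C₂ := mul_comm _ _
  -- integrability of the basic double integrand
  have hF1 : Integrable (uncurry fun x y => c x * (ξ y * conj (ω x y))) (μ.prod ν) := by
    have hFm : AEStronglyMeasurable (uncurry fun x y => c x * (ξ y * conj (ω x y)))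
        (μ.prod ν) :=
      hcm.comp_fst.mul (hξm.comp_snd.mul (hconj.comp hωm).aestronglyMeasurable)
    refine ⟨hFm, ?_⟩
    have hA : AEMeasurable (fun p : α × β => (‖c p.1‖₊ : ℝ≥0∞) ^ 2 * (‖ω p.1 p.2‖₊ : ℝ≥0∞))
        (μ.prod ν) := (hcm.comp_fst.enorm.pow_const 2).mul hωm.enorm.aemeasurable
    have hB' : AEMeasurable (fun p : α × β => (‖ξ p.2‖₊ : ℝ≥0∞) ^ 2 * (‖ω p.1 p.2‖₊ : ℝ≥0∞))
        (μ.prod ν) := (hξm.comp_snd.enorm.pow_const 2).mul hωm.enorm.aemeasurable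
    have hbd : ∀ p : α × β, (‖c p.1 * (ξ p.2 * conj (ω p.1 p.2))‖₊ : ℝ≥0∞) ≤
        (‖c p.1‖₊ : ℝ≥0∞) ^ 2 * (‖ω p.1 p.2‖₊ : ℝ≥0∞) +
          (‖ξ p.2‖₊ : ℝ≥0∞) ^ 2 * (‖ω p.1 p.2‖₊ : ℝ≥0∞) := by
      intro p
      have he : (‖c p.1 * (ξ p.2 * conj (ω p.1 p.2))‖₊ : ℝ≥0∞) =
          ((‖c p.1‖₊ : ℝ≥0∞) * (‖ξ p.2‖₊ : ℝ≥0∞)) * (‖ω p.1 p.2‖₊ : ℝ≥0∞) := by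
        simp only [nnnorm_mul, RCLike.nnnorm_conj, ENNReal.coe_mul]
        ring
      rw [he, ← add_mul]
      exact mul_le_mul_left (mul_le_sq_add_sq' _ _) _
    show (∫⁻ p, (‖c p.1 * (ξ p.2 * conj (ω p.1 p.2))‖₊ : ℝ≥0∞) ∂μ.prod ν) < ⊤
    refine lt_of_le_of_lt (lintegral_mono hbd) ?_
    rw [lintegral_add_left' hA]
    refine ENNReal.add_lt_top.2 ⟨?_, ?_⟩
    · rw [lintegral_prod _ hA]
      calc ∫⁻ x, ∫⁻ y, (‖c x‖₊ : ℝ≥0∞) ^ 2 * (‖ω x y‖₊ : ℝ≥0∞) ∂ν ∂μ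
          = ∫⁻ x, (‖c x‖₊ : ℝ≥0∞) ^ 2 * ∫⁻ y, (‖ω x y‖₊ : ℝ≥0∞) ∂ν ∂μ :=
            lintegral_congr fun x =>
              lintegral_const_mul' _ _ (ENNReal.pow_ne_top ENNReal.coe_ne_top)
        _ ≤ ∫⁻ x, (‖c x‖₊ : ℝ≥0∞) ^ 2 * ENNReal.ofReal C₁ ∂μ :=
            lintegral_mono_ae (hrow.mono fun x hx => mul_le_mul_right hx _)
        _ = (∫⁻ x, (‖c x‖₊ : ℝ≥0∞) ^ 2 ∂μ) * ENNReal.ofReal C₁ :=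
            lintegral_mul_const' _ _ ENNReal.ofReal_ne_top
        _ < ⊤ := ENNReal.mul_lt_top hc2' ENNReal.ofReal_lt_top
    · rw [lintegral_prod_symm _ hB']
      calc ∫⁻ y, ∫⁻ x, (‖ξ y‖₊ : ℝ≥0∞) ^ 2 * (‖ω x y‖₊ : ℝ≥0∞) ∂μ ∂ν
          = ∫⁻ y, (‖ξ y‖₊ : ℝ≥0∞) ^ 2 * ∫⁻ x, (‖ω x y‖₊ : ℝ≥0∞) ∂μ ∂ν :=
            lintegral_congr fun y =>
              lintegral_const_mul' _ _ (ENNReal.pow_ne_top ENNReal.coe_ne_top)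
        _ ≤ ∫⁻ y, (‖ξ y‖₊ : ℝ≥0∞) ^ 2 * ENNReal.ofReal C₂ ∂ν :=
            lintegral_mono_ae (hcol.mono fun y hy => mul_le_mul_right hy _)
        _ = (∫⁻ y, (‖ξ y‖₊ : ℝ≥0∞) ^ 2 ∂ν) * ENNReal.ofReal C₂ :=
            lintegral_mul_const' _ _ ENNReal.ofReal_ne_top
        _ < ⊤ := ENNReal.mul_lt_top hξ2' ENNReal.ofReal_lt_top
  -- the auxiliary functions g and T
  set g : β → ℂ := fun y => ∫ x, c x * conj (ω x y) ∂μ with hgdef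
  set T : α → α → ℂ := fun x x' => ∫ y, ω x y * conj (ω x' y) ∂ν with hTdef
  have hm1 : Measurable fun q : (α × α) × β => ω q.1.1 q.2 :=
    hω.comp (measurable_fst.fst.prodMk measurable_snd)
  have hm2 : Measurable fun q : (α × α) × β => ω q.1.2 q.2 :=
    hω.comp (measurable_fst.snd.prodMk measurable_snd)
  have hker : Measurable fun q : (α × α) × β => ω q.1.1 q.2 * conj (ω q.1.2 q.2) :=
    hm1.mul (hconj.comp hm2)
  have hTsm : StronglyMeasurable fun p : α × α => T p.1 p.2 :=
    hker.stronglyMeasurable.integral_prod_right'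
  have hTnn : ∀ x x', (‖T x x'‖₊ : ℝ≥0∞) ≤
      ∫⁻ y, (‖ω x y‖₊ : ℝ≥0∞) * (‖ω x' y‖₊ : ℝ≥0∞) ∂ν := by
    intro x x'
    refine le_trans (enorm_integral_le_lintegral_enorm _) (le_of_eq ?_)
    refine lintegral_congr fun y => ?_
    simp [nnnorm_mul, RCLike.nnnorm_conj]
    rfl
  have hTint : ∀ x, (∫⁻ y, (‖ω x y‖₊ : ℝ≥0∞) ∂ν) ≤ ENNReal.ofReal C₁ →
      Integrable (fun x' => T x x') μ := by
    intro x hx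
    refine ⟨(hTsm.comp_measurable (measurable_const.prodMk measurable_id)).aestronglyMeasurable,
      ?_⟩
    show (∫⁻ x', (‖T x x'‖₊ : ℝ≥0∞) ∂μ) < ⊤
    calc ∫⁻ x', (‖T x x'‖₊ : ℝ≥0∞) ∂μ
        ≤ ∫⁻ x', ∫⁻ y, (‖ω x y‖₊ : ℝ≥0∞) * (‖ω x' y‖₊ : ℝ≥0∞) ∂ν ∂μ :=
          lintegral_mono fun x' => hTnn x x'
      _ ≤ ENNReal.ofReal C₁ * ENNReal.ofReal C₂ := hKK x hx
      _ < ⊤ := ENNReal.mul_lt_top ENNReal.ofReal_lt_top ENNReal.ofReal_lt_top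
  have hTint' : ∀ x', (∫⁻ y, (‖ω x' y‖₊ : ℝ≥0∞) ∂ν) ≤ ENNReal.ofReal C₁ →
      Integrable (fun x => T x x') μ := by
    intro x' hx'
    refine ⟨(hTsm.comp_measurable (measurable_id.prodMk measurable_const)).aestronglyMeasurable,
      ?_⟩
    show (∫⁻ x, (‖T x x'‖₊ : ℝ≥0∞) ∂μ) < ⊤
    calc ∫⁻ x, (‖T x x'‖₊ : ℝ≥0∞) ∂μ
        ≤ ∫⁻ x, ∫⁻ y, (‖ω x y‖₊ : ℝ≥0∞) * (‖ω x' y‖₊ : ℝ≥0∞) ∂ν ∂μ :=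
          lintegral_mono fun x => hTnn x x'
      _ ≤ ENNReal.ofReal C₁ * ENNReal.ofReal C₂ := hKK' x' hx'
      _ < ⊤ := ENNReal.mul_lt_top ENNReal.ofReal_lt_top ENNReal.ofReal_lt_top
  have hTconj : ∀ x x', T x x' = conj (T x' x) := by
    intro x x'
    rw [hTdef, ← integral_conj]
    refine integral_congr_ae (Filter.Eventually.of_forall fun y => ?_)
    simp only [map_mul, Complex.conj_conj]
    ring
  have hTB : ∀ᵐ x ∂μ, (∫ x', ‖T x x'‖ ∂μ) ≤ B := by
    filter_upwards [h₁] with x hx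
    have he : ∀ x', ‖T x x'‖ = ‖T x' x‖ := fun x' => by
      rw [hTconj x x', RCLike.norm_conj]
    simp_rw [he]
    exact hx.2.2
  have hTBae : ∀ᵐ x ∂μ, Integrable (fun x' => T x x') μ := by
    filter_upwards [hrow] with x hx
    exact hTint x hx
  -- first Fubini: the main integral as an inner product against g
  have hswap : (∫ x, (c x * ∫ y, ξ y * conj (ω x y) ∂ν) ∂μ) = ∫ y, ξ y * g y ∂ν := by
    have h1 : ∀ x, c x * ∫ y, ξ y * conj (ω x y) ∂ν = ∫ y, c x * (ξ y * conj (ω x y)) ∂ν :=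
      fun x => (integral_const_mul _ _).symm
    simp_rw [h1]
    rw [integral_integral_swap hF1]
    refine integral_congr_ae (Filter.Eventually.of_forall fun y => ?_)
    calc ∫ x, c x * (ξ y * conj (ω x y)) ∂μ = ∫ x, ξ y * (c x * conj (ω x y)) ∂μ := by
          refine integral_congr_ae (Filter.Eventually.of_forall fun x => ?_)
          ring
      _ = ξ y * g y := integral_const_mul _ _
  -- measurability of g
  have hgm : AEStronglyMeasurable g ν := by
    have : AEStronglyMeasurable (fun p : β × α => c p.2 * conj (ω p.2 p.1)) (ν.prod μ) :=
      hcm.comp_snd.mul (hconj.comp (hω.comp (measurable_snd.prodMk measurable_fst))).aestronglyMeasurable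
    exact this.integral_prod_right'
  -- integrability of the triple-product integrand Ψ
  have hΨ : Integrable (uncurry fun (p : α × α) (y : β) =>
      (c p.1 * conj (ω p.1 y)) * (conj (c p.2) * ω p.2 y)) ((μ.prod μ).prod ν) := by
    have haesm : AEStronglyMeasurable (uncurry fun (p : α × α) (y : β) =>
        (c p.1 * conj (ω p.1 y)) * (conj (c p.2) * ω p.2 y)) ((μ.prod μ).prod ν) := by
      refine (AEStronglyMeasurable.mul ?_ ?_)
      · exact hcm.comp_fst.comp_fst.mul (hconj.comp hm1).aestronglyMeasurable
      · exact (Complex.continuous_conj.comp_aestronglyMeasurable hcm.comp_snd.comp_fst).mul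
          hm2.aestronglyMeasurable
    refine ⟨haesm, ?_⟩
    have hKKm : Measurable fun q : (α × α) × β =>
        (‖ω q.1.1 q.2‖₊ : ℝ≥0∞) * (‖ω q.1.2 q.2‖₊ : ℝ≥0∞) := hm1.enorm.mul hm2.enorm
    have hA : AEMeasurable (fun q : (α × α) × β => (‖c q.1.1‖₊ : ℝ≥0∞) ^ 2 *
        ((‖ω q.1.1 q.2‖₊ : ℝ≥0∞) * (‖ω q.1.2 q.2‖₊ : ℝ≥0∞))) ((μ.prod μ).prod ν) :=
      (hcm.comp_fst.comp_fst.enorm.pow_const 2).mul hKKm.aemeasurable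
    have hBm : AEMeasurable (fun q : (α × α) × β => (‖c q.1.2‖₊ : ℝ≥0∞) ^ 2 *
        ((‖ω q.1.1 q.2‖₊ : ℝ≥0∞) * (‖ω q.1.2 q.2‖₊ : ℝ≥0∞))) ((μ.prod μ).prod ν) :=
      (hcm.comp_snd.comp_fst.enorm.pow_const 2).mul hKKm.aemeasurable
    have hbd : ∀ q : (α × α) × β,
        (‖(c q.1.1 * conj (ω q.1.1 q.2)) * (conj (c q.1.2) * ω q.1.2 q.2)‖₊ : ℝ≥0∞) ≤
        (‖c q.1.1‖₊ : ℝ≥0∞) ^ 2 * ((‖ω q.1.1 q.2‖₊ : ℝ≥0∞) * (‖ω q.1.2 q.2‖₊ : ℝ≥0∞)) +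
          (‖c q.1.2‖₊ : ℝ≥0∞) ^ 2 * ((‖ω q.1.1 q.2‖₊ : ℝ≥0∞) * (‖ω q.1.2 q.2‖₊ : ℝ≥0∞)) := by
      intro q
      have he : (‖(c q.1.1 * conj (ω q.1.1 q.2)) * (conj (c q.1.2) * ω q.1.2 q.2)‖₊ : ℝ≥0∞) =
          ((‖c q.1.1‖₊ : ℝ≥0∞) * (‖c q.1.2‖₊ : ℝ≥0∞)) *
            ((‖ω q.1.1 q.2‖₊ : ℝ≥0∞) * (‖ω q.1.2 q.2‖₊ : ℝ≥0∞)) := by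
        simp only [nnnorm_mul, RCLike.nnnorm_conj, ENNReal.coe_mul]
        ring
      rw [he, ← add_mul]
      exact mul_le_mul_left (mul_le_sq_add_sq' _ _) _
    show (∫⁻ q, (‖(c q.1.1 * conj (ω q.1.1 q.2)) * (conj (c q.1.2) * ω q.1.2 q.2)‖₊ : ℝ≥0∞)
      ∂(μ.prod μ).prod ν) < ⊤
    refine lt_of_le_of_lt (lintegral_mono hbd) ?_
    rw [lintegral_add_left' hA]
    refine ENNReal.add_lt_top.2 ⟨?_, ?_⟩
    · rw [lintegral_prod _ hA]
      have hinner : ∀ p : α × α, (∫⁻ y, (‖c p.1‖₊ : ℝ≥0∞) ^ 2 *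
          ((‖ω p.1 y‖₊ : ℝ≥0∞) * (‖ω p.2 y‖₊ : ℝ≥0∞)) ∂ν) =
          (‖c p.1‖₊ : ℝ≥0∞) ^ 2 * ∫⁻ y, (‖ω p.1 y‖₊ : ℝ≥0∞) * (‖ω p.2 y‖₊ : ℝ≥0∞) ∂ν :=
        fun p => lintegral_const_mul' _ _ (ENNReal.pow_ne_top ENNReal.coe_ne_top)
      rw [lintegral_congr hinner]
      have hGm : AEMeasurable (fun p : α × α => (‖c p.1‖₊ : ℝ≥0∞) ^ 2 *
          ∫⁻ y, (‖ω p.1 y‖₊ : ℝ≥0∞) * (‖ω p.2 y‖₊ : ℝ≥0∞) ∂ν) (μ.prod μ) :=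
        (hcm.comp_fst.enorm.pow_const 2).mul hKKm.lintegral_prod_right'.aemeasurable
      rw [lintegral_prod _ hGm]
      calc ∫⁻ x, ∫⁻ x', (‖c x‖₊ : ℝ≥0∞) ^ 2 *
            ∫⁻ y, (‖ω x y‖₊ : ℝ≥0∞) * (‖ω x' y‖₊ : ℝ≥0∞) ∂ν ∂μ ∂μ
          = ∫⁻ x, (‖c x‖₊ : ℝ≥0∞) ^ 2 *
            ∫⁻ x', ∫⁻ y, (‖ω x y‖₊ : ℝ≥0∞) * (‖ω x' y‖₊ : ℝ≥0∞) ∂ν ∂μ ∂μ :=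
            lintegral_congr fun x =>
              lintegral_const_mul' _ _ (ENNReal.pow_ne_top ENNReal.coe_ne_top)
        _ ≤ ∫⁻ x, (‖c x‖₊ : ℝ≥0∞) ^ 2 * (ENNReal.ofReal C₁ * ENNReal.ofReal C₂) ∂μ :=
            lintegral_mono_ae (hrow.mono fun x hx => mul_le_mul_right (hKK x hx) _)
        _ = (∫⁻ x, (‖c x‖₊ : ℝ≥0∞) ^ 2 ∂μ) * (ENNReal.ofReal C₁ * ENNReal.ofReal C₂) :=
            lintegral_mul_const' _ _
              (ENNReal.mul_ne_top ENNReal.ofReal_ne_top ENNReal.ofReal_ne_top)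
        _ < ⊤ := ENNReal.mul_lt_top hc2'
            (ENNReal.mul_lt_top ENNReal.ofReal_lt_top ENNReal.ofReal_lt_top)
    · rw [lintegral_prod _ hBm]
      have hinner : ∀ p : α × α, (∫⁻ y, (‖c p.2‖₊ : ℝ≥0∞) ^ 2 *
          ((‖ω p.1 y‖₊ : ℝ≥0∞) * (‖ω p.2 y‖₊ : ℝ≥0∞)) ∂ν) =
          (‖c p.2‖₊ : ℝ≥0∞) ^ 2 * ∫⁻ y, (‖ω p.1 y‖₊ : ℝ≥0∞) * (‖ω p.2 y‖₊ : ℝ≥0∞) ∂ν :=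
        fun p => lintegral_const_mul' _ _ (ENNReal.pow_ne_top ENNReal.coe_ne_top)
      rw [lintegral_congr hinner]
      have hGm : AEMeasurable (fun p : α × α => (‖c p.2‖₊ : ℝ≥0∞) ^ 2 *
          ∫⁻ y, (‖ω p.1 y‖₊ : ℝ≥0∞) * (‖ω p.2 y‖₊ : ℝ≥0∞) ∂ν) (μ.prod μ) :=
        (hcm.comp_snd.enorm.pow_const 2).mul hKKm.lintegral_prod_right'.aemeasurable
      rw [lintegral_prod_symm _ hGm]
      calc ∫⁻ x', ∫⁻ x, (‖c x'‖₊ : ℝ≥0∞) ^ 2 *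
            ∫⁻ y, (‖ω x y‖₊ : ℝ≥0∞) * (‖ω x' y‖₊ : ℝ≥0∞) ∂ν ∂μ ∂μ
          = ∫⁻ x', (‖c x'‖₊ : ℝ≥0∞) ^ 2 *
            ∫⁻ x, ∫⁻ y, (‖ω x y‖₊ : ℝ≥0∞) * (‖ω x' y‖₊ : ℝ≥0∞) ∂ν ∂μ ∂μ :=
            lintegral_congr fun x' =>
              lintegral_const_mul' _ _ (ENNReal.pow_ne_top ENNReal.coe_ne_top)
        _ ≤ ∫⁻ x', (‖c x'‖₊ : ℝ≥0∞) ^ 2 * (ENNReal.ofReal C₁ * ENNReal.ofReal C₂) ∂μ :=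
            lintegral_mono_ae (hrow.mono fun x' hx' => mul_le_mul_right (hKK' x' hx') _)
        _ = (∫⁻ x', (‖c x'‖₊ : ℝ≥0∞) ^ 2 ∂μ) * (ENNReal.ofReal C₁ * ENNReal.ofReal C₂) :=
            lintegral_mul_const' _ _
              (ENNReal.mul_ne_top ENNReal.ofReal_ne_top ENNReal.ofReal_ne_top)
        _ < ⊤ := ENNReal.mul_lt_top hc2'
            (ENNReal.mul_lt_top ENNReal.ofReal_lt_top ENNReal.ofReal_lt_top)
  -- expansion of g y * conj (g y)
  have hexp : ∀ y, g y * conj (g y) =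
      ∫ p : α × α, (c p.1 * conj (ω p.1 y)) * (conj (c p.2) * ω p.2 y) ∂μ.prod μ := by
    intro y
    have hconjg : conj (g y) = ∫ x, conj (c x) * ω x y ∂μ := by
      rw [hgdef, ← integral_conj]
      refine integral_congr_ae (Filter.Eventually.of_forall fun x => ?_)
      simp [map_mul]
    rw [hconjg, hgdef]
    exact (integral_prod_mul _ _).symm
  -- Fubini for the triple integral
  have hΦeq : (∫ y, g y * conj (g y) ∂ν) =
      ∫ p : α × α, (c p.1 * conj (c p.2)) * conj (T p.1 p.2) ∂μ.prod μ := by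
    simp_rw [hexp]
    rw [← integral_integral_swap hΨ]
    refine integral_congr_ae (Filter.Eventually.of_forall fun p => ?_)
    calc ∫ y, (c p.1 * conj (ω p.1 y)) * (conj (c p.2) * ω p.2 y) ∂ν
        = ∫ y, (c p.1 * conj (c p.2)) * (conj (ω p.1 y) * ω p.2 y) ∂ν := by
          refine integral_congr_ae (Filter.Eventually.of_forall fun y => ?_)
          ring
      _ = (c p.1 * conj (c p.2)) * ∫ y, conj (ω p.1 y) * ω p.2 y ∂ν := integral_const_mul _ _
      _ = (c p.1 * conj (c p.2)) * conj (T p.1 p.2) := by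
          congr 1
          rw [hTdef, ← integral_conj]
          refine integral_congr_ae (Filter.Eventually.of_forall fun y => ?_)
          simp [map_mul]
  -- integrability of ‖g‖²
  have hmulconj : ∀ z : ℂ, z * conj z = ((‖z‖ ^ 2 : ℝ) : ℂ) := by
    intro z
    rw [Complex.mul_conj, Complex.normSq_eq_norm_sq]
  have hgg_int : Integrable (fun y => ‖g y‖ ^ 2) ν := by
    have h := hΨ.integral_prod_right
    have h2 : Integrable (fun y => g y * conj (g y)) ν :=
      h.congr (Filter.Eventually.of_forall fun y => (hexp y).symm)
    refine h2.re.congr (Filter.Eventually.of_forall fun y => ?_)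
    show RCLike.re (g y * conj (g y)) = ‖g y‖ ^ 2
    rw [hmulconj]
    simp [← Complex.ofReal_pow]
  have hgmem : MemLp g 2 ν := (memLp_two_iff_integrable_sq_norm hgm).2 hgg_int
  -- the two halves of the kernel bound
  have hD1 : Integrable (fun p : α × α => ‖c p.1‖ ^ 2 * ‖T p.1 p.2‖) (μ.prod μ) := by
    have hmeasD1 : AEStronglyMeasurable (fun p : α × α => ‖c p.1‖ ^ 2 * ‖T p.1 p.2‖)
        (μ.prod μ) :=
      ((continuous_pow 2).comp_aestronglyMeasurable hcm.comp_fst.norm).mul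
        hTsm.aestronglyMeasurable.norm
    refine (integrable_prod_iff hmeasD1).2 ⟨?_, ?_⟩
    · filter_upwards [hTBae] with x hx
      exact hx.norm.const_mul _
    · refine Integrable.mono' (hc2.const_mul B) hmeasD1.norm.integral_prod_right' ?_
      filter_upwards [hTB, hTBae] with x hx hxi
      rw [Real.norm_of_nonneg (integral_nonneg fun x' => norm_nonneg _)]
      have he : ∀ x', ‖‖c x‖ ^ 2 * ‖T x x'‖‖ = ‖c x‖ ^ 2 * ‖T x x'‖ := fun x' =>
        Real.norm_of_nonneg (by positivity)
      calc ∫ x', ‖‖c x‖ ^ 2 * ‖T x x'‖‖ ∂μ = ∫ x', ‖c x‖ ^ 2 * ‖T x x'‖ ∂μ := by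
            refine integral_congr_ae (Filter.Eventually.of_forall fun x' => he x')
        _ = ‖c x‖ ^ 2 * ∫ x', ‖T x x'‖ ∂μ := integral_const_mul _ _
        _ ≤ ‖c x‖ ^ 2 * B := mul_le_mul_of_nonneg_left hx (by positivity)
        _ = B * ‖c x‖ ^ 2 := mul_comm _ _
  have hD2 : Integrable (fun p : α × α => ‖c p.2‖ ^ 2 * ‖T p.1 p.2‖) (μ.prod μ) := by
    have hmeasD2 : AEStronglyMeasurable (fun p : α × α => ‖c p.2‖ ^ 2 * ‖T p.1 p.2‖)
        (μ.prod μ) :=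
      ((continuous_pow 2).comp_aestronglyMeasurable hcm.comp_snd.norm).mul
        hTsm.aestronglyMeasurable.norm
    refine (integrable_prod_iff' hmeasD2).2 ⟨?_, ?_⟩
    · filter_upwards [hrow] with x' hx'
      exact ((hTint' x' hx').norm.const_mul _)
    · refine Integrable.mono' (hc2.const_mul B) hmeasD2.norm.prod_swap.integral_prod_right' ?_
      filter_upwards [h₁, hrow] with x' hx' hxr
      rw [Real.norm_of_nonneg (integral_nonneg fun x => norm_nonneg _)]
      have he : ∀ x, ‖‖c x'‖ ^ 2 * ‖T x x'‖‖ = ‖c x'‖ ^ 2 * ‖T x x'‖ := fun x =>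
        Real.norm_of_nonneg (by positivity)
      calc ∫ x, ‖‖c x'‖ ^ 2 * ‖T x x'‖‖ ∂μ = ∫ x, ‖c x'‖ ^ 2 * ‖T x x'‖ ∂μ := by
            refine integral_congr_ae (Filter.Eventually.of_forall fun x => he x)
        _ = ‖c x'‖ ^ 2 * ∫ x, ‖T x x'‖ ∂μ := integral_const_mul _ _
        _ ≤ ‖c x'‖ ^ 2 * B := mul_le_mul_of_nonneg_left hx'.2.2 (by positivity)
        _ = B * ‖c x'‖ ^ 2 := mul_comm _ _
  have hI1 : (∫ p : α × α, ‖c p.1‖ ^ 2 * ‖T p.1 p.2‖ ∂μ.prod μ) ≤ B * ∫ x, ‖c x‖ ^ 2 ∂μ := by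
    rw [integral_prod _ hD1]
    have hstep : (∫ x, ∫ x', ‖c x‖ ^ 2 * ‖T x x'‖ ∂μ ∂μ) ≤ ∫ x, B * ‖c x‖ ^ 2 ∂μ := by
      refine integral_mono_ae hD1.integral_prod_left (hc2.const_mul B) ?_
      filter_upwards [hTB] with x hx
      calc ∫ x', ‖c x‖ ^ 2 * ‖T x x'‖ ∂μ = ‖c x‖ ^ 2 * ∫ x', ‖T x x'‖ ∂μ :=
            integral_const_mul _ _
        _ ≤ ‖c x‖ ^ 2 * B := mul_le_mul_of_nonneg_left hx (by positivity)
        _ = B * ‖c x‖ ^ 2 := mul_comm _ _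
    exact hstep.trans (le_of_eq (integral_const_mul _ _))
  have hI2 : (∫ p : α × α, ‖c p.2‖ ^ 2 * ‖T p.1 p.2‖ ∂μ.prod μ) ≤ B * ∫ x, ‖c x‖ ^ 2 ∂μ := by
    rw [integral_prod_symm _ hD2]
    have hstep : (∫ x', ∫ x, ‖c x'‖ ^ 2 * ‖T x x'‖ ∂μ ∂μ) ≤ ∫ x', B * ‖c x'‖ ^ 2 ∂μ := by
      refine integral_mono_ae hD2.integral_prod_right (hc2.const_mul B) ?_
      filter_upwards [h₁] with x' hx'
      calc ∫ x, ‖c x'‖ ^ 2 * ‖T x x'‖ ∂μ = ‖c x'‖ ^ 2 * ∫ x, ‖T x x'‖ ∂μ :=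
            integral_const_mul _ _
        _ ≤ ‖c x'‖ ^ 2 * B := mul_le_mul_of_nonneg_left hx'.2.2 (by positivity)
        _ = B * ‖c x'‖ ^ 2 := mul_comm _ _
    exact hstep.trans (le_of_eq (integral_const_mul _ _))
  -- the main L² bound for g
  have hgg : (∫ y, ‖g y‖ ^ 2 ∂ν) = (∫ y, g y * conj (g y) ∂ν).re := by
    have : (∫ y, g y * conj (g y) ∂ν) = ((∫ y, ‖g y‖ ^ 2 ∂ν : ℝ) : ℂ) := by
      simp_rw [hmulconj]
      exact integral_ofReal
    rw [this, Complex.ofReal_re]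
  have hre : ∀ z : ℂ, z.re ≤ ‖z‖ := fun z => by
    exact Complex.re_le_norm z
  have hgT : (∫ y, ‖g y‖ ^ 2 ∂ν) ≤ B * ∫ x, ‖c x‖ ^ 2 ∂μ := by
    rw [hgg, hΦeq]
    refine le_trans (hre _) ?_
    refine le_trans (norm_integral_le_integral_norm _) ?_
    have hD : Integrable (fun p : α × α =>
        (‖c p.1‖ ^ 2 * ‖T p.1 p.2‖ + ‖c p.2‖ ^ 2 * ‖T p.1 p.2‖) / 2) (μ.prod μ) :=
      (hD1.add hD2).div_const 2
    refine le_trans (integral_mono_of_nonneg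
      (Filter.Eventually.of_forall fun p => norm_nonneg _) hD
      (Filter.Eventually.of_forall fun p => ?_)) ?_
    · show ‖(c p.1 * conj (c p.2)) * conj (T p.1 p.2)‖ ≤
        (‖c p.1‖ ^ 2 * ‖T p.1 p.2‖ + ‖c p.2‖ ^ 2 * ‖T p.1 p.2‖) / 2
      have he : ‖(c p.1 * conj (c p.2)) * conj (T p.1 p.2)‖ =
          ‖c p.1‖ * ‖c p.2‖ * ‖T p.1 p.2‖ := by
        simp [norm_mul, RCLike.norm_conj]
      rw [he]
      nlinarith [mul_nonneg (sq_nonneg (‖c p.1‖ - ‖c p.2‖)) (norm_nonneg (T p.1 p.2))]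
    · rw [integral_div, integral_add hD1 hD2]
      have := hI1
      have := hI2
      linarith
  -- Cauchy–Schwarz and conclusion
  have h2e : ENNReal.ofReal (2 : ℝ) = 2 := by norm_num
  have hrpow2 : ∀ r : ℝ, r ^ (2 : ℝ) = r ^ 2 := fun r => by
    rw [show (2 : ℝ) = ((2 : ℕ) : ℝ) by norm_num, Real.rpow_natCast]
  have hCS : ‖∫ y, ξ y * g y ∂ν‖ ≤
      (∫ y, ‖ξ y‖ ^ 2 ∂ν).sqrt * (∫ y, ‖g y‖ ^ 2 ∂ν).sqrt := by
    calc ‖∫ y, ξ y * g y ∂ν‖ ≤ ∫ y, ‖ξ y * g y‖ ∂ν := norm_integral_le_integral_norm _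
      _ = ∫ y, ‖ξ y‖ * ‖g y‖ ∂ν := by simp_rw [norm_mul]
      _ ≤ (∫ y, ‖ξ y‖ ^ (2 : ℝ) ∂ν) ^ (1 / (2 : ℝ)) *
            (∫ y, ‖g y‖ ^ (2 : ℝ) ∂ν) ^ (1 / (2 : ℝ)) := by
          refine integral_mul_norm_le_Lp_mul_Lq Real.HolderConjugate.two_two ?_ ?_
          · rw [h2e]; exact hξ
          · rw [h2e]; exact hgmem
      _ = (∫ y, ‖ξ y‖ ^ 2 ∂ν).sqrt * (∫ y, ‖g y‖ ^ 2 ∂ν).sqrt := by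
          simp_rw [hrpow2]
          rw [← Real.sqrt_eq_rpow, ← Real.sqrt_eq_rpow]
  calc ‖∫ x, (c x * ∫ y, ξ y * conj (ω x y) ∂ν) ∂μ‖ = ‖∫ y, ξ y * g y ∂ν‖ := by rw [hswap]
    _ ≤ (∫ y, ‖ξ y‖ ^ 2 ∂ν).sqrt * (∫ y, ‖g y‖ ^ 2 ∂ν).sqrt := hCS
    _ ≤ (∫ y, ‖ξ y‖ ^ 2 ∂ν).sqrt * (B * ∫ x, ‖c x‖ ^ 2 ∂μ).sqrt := by
        exact mul_le_mul_of_nonneg_left (Real.sqrt_le_sqrt hgT) (Real.sqrt_nonneg _)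
    _ = (∫ y, ‖ξ y‖ ^ 2 ∂ν).sqrt * (∫ x, ‖c x‖ ^ 2 ∂μ).sqrt * B.sqrt := by
        rw [Real.sqrt_mul hB0]
        ring

/-- Laporta's Lemma 2: a duality / large-sieve type inequality. -/
theorem stmt_2 (m n : ℕ) (Ω₁ : Set (Fin m → ℝ)) (Ω₂ : Set (Fin n → ℝ))
    (hΩ₁ : MeasurableSet Ω₁) (hΩ₂ : MeasurableSet Ω₂)
    (c : (Fin m → ℝ) → ℂ) (ξ : (Fin n → ℝ) → ℂ)
    (ω : (Fin m → ℝ) → (Fin n → ℝ) → ℂ)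
    (hc : MemLp c 2 (volume.restrict Ω₁))
    (hξ : MemLp ξ 2 (volume.restrict Ω₂))
    (hω : Measurable (Function.uncurry ω))
    (C₁ C₂ : ℝ)
    (hsup₁ : ∀ x ∈ Ω₁, (∫ y in Ω₂, ‖ω x y‖) ≤ C₁)
    (hsup₂ : ∀ y ∈ Ω₂, (∫ x in Ω₁, ‖ω x y‖) ≤ C₂)
    (hint₁ : ∀ x ∈ Ω₁, Integrable (fun y => ω x y) (volume.restrict Ω₂))
    (hint₂ : ∀ y ∈ Ω₂, Integrable (fun x => ω x y) (volume.restrict Ω₁))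
    (B : ℝ)
    (hB : ∀ x' ∈ Ω₁,
      (∫ x in Ω₁, ‖∫ y in Ω₂, ω x y * starRingEnd ℂ (ω x' y)‖) ≤ B) :
    ‖∫ x in Ω₁, c x * ∫ y in Ω₂, ξ y * starRingEnd ℂ (ω x y)‖ ≤
      (∫ y in Ω₂, ‖ξ y‖ ^ 2).sqrt * (∫ x in Ω₁, ‖c x‖ ^ 2).sqrt * B.sqrt := by
  have h₁ : ∀ᵐ x ∂(volume.restrict Ω₁),
      Integrable (fun y => ω x y) (volume.restrict Ω₂) ∧
        (∫ y in Ω₂, ‖ω x y‖) ≤ C₁ ∧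
        (∫ x' in Ω₁, ‖∫ y in Ω₂, ω x' y * starRingEnd ℂ (ω x y)‖) ≤ B :=
    (ae_restrict_mem hΩ₁).mono fun x hx => ⟨hint₁ x hx, hsup₁ x hx, hB x hx⟩
  have h₂ : ∀ᵐ y ∂(volume.restrict Ω₂),
      Integrable (fun x => ω x y) (volume.restrict Ω₁) ∧ (∫ x in Ω₁, ‖ω x y‖) ≤ C₂ :=
    (ae_restrict_mem hΩ₂).mono fun y hy => ⟨hint₂ y hy, hsup₂ y hy⟩
  exact key c ξ ω hc hξ hω C₁ C₂ B h₁ h₂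
end

section
/- Let 1 < c < 3 with c ≠ 2, let X be a large real number, and set τ = X^{1−c−η} for a fixed small η > 0. Define S(x) = ∑_{X < p ≤ 2X} (log p) e(p^c x), where the sum is over primes p. Then ∫_{−τ}^{τ} |S(x)|⁴ dx ≪ X^{4−c} (log X)⁵. -/
/-!
Bound `|S(x)|⁴ ≤ (∑ log p)² |S(x)|² ≤ (4 X log X)² |S(x)|²` pointwise, so it suffices to show
`∫_{-τ}^{τ} |S|² ≪ X^{2-c} log³ X`. Expanding the square, the pair `(p, q)` contributes
`log p log q ∫_{-τ}^{τ} cos(2π(p^c - q^c)x) dx`, which is at most `2τ log² (2X)` on the diagonal and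
`log² (2X) / (π |p^c - q^c|)` off it. Convexity of `t ↦ t^c` spaces the frequencies:
`|p^c - q^c| ≥ c X^{c-1} |p - q|`, so for fixed `p` the off-diagonal terms sum to
`≪ X^{1-c} log³ X` by the harmonic series, as does the diagonal since `τ ≤ X^{1-c}`.
Summing over the `≤ 2X` primes gives the claim.
-/

open MeasureTheory Finset Real

lemma mul_rpow_sub_one_mul_sub_le_rpow_sub_rpow {c X p q : ℝ} (hc : 1 ≤ c) (hX : 0 ≤ X)
    (hXq : X ≤ q) (hqp : q ≤ p) : c * X ^ (c - 1) * (p - q) ≤ p ^ c - q ^ c := by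
  rcases hqp.eq_or_lt with rfl | hqp
  · simp
  have hq : 0 ≤ q := hX.trans hXq
  have hslope := (convexOn_rpow hc).le_slope_of_hasDerivAt (Set.mem_Ici.2 hq)
    (Set.mem_Ici.2 (hq.trans hqp.le)) hqp (Real.hasDerivAt_rpow_const (Or.inr hc))
  rw [slope_def_field, le_div_iff₀ (sub_pos.2 hqp)] at hslope
  have hmono : X ^ (c - 1) ≤ q ^ (c - 1) := rpow_le_rpow hX hXq (by linarith)
  have hcpq : 0 ≤ c * (p - q) := mul_nonneg (by linarith) (sub_nonneg.2 hqp.le)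
  nlinarith [mul_le_mul_of_nonneg_right hmono hcpq]

lemma mul_rpow_sub_one_mul_abs_sub_le_abs_rpow_sub_rpow {c X p q : ℝ} (hc : 1 ≤ c)
    (hX : 0 ≤ X) (hXp : X ≤ p) (hXq : X ≤ q) : c * X ^ (c - 1) * |p - q| ≤ |p ^ c - q ^ c| := by
  rcases le_total q p with hqp | hpq
  · have h := mul_rpow_sub_one_mul_sub_le_rpow_sub_rpow hc hX hXq hqp
    rw [abs_of_nonneg (sub_nonneg.2 hqp)]
    exact h.trans (le_abs_self _)
  · have h := mul_rpow_sub_one_mul_sub_le_rpow_sub_rpow hc hX hXp hpq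
    rw [abs_sub_comm, abs_of_nonneg (sub_nonneg.2 hpq), abs_sub_comm]
    exact h.trans (le_abs_self _)

lemma Nat.cast_dist (p q : ℕ) : (Nat.dist p q : ℝ) = |(p : ℝ) - q| := by
  rcases le_total q p with h | h
  · rw [Nat.dist_eq_sub_of_le_right h, Nat.cast_sub h, abs_of_nonneg (by simp [h])]
  · rw [Nat.dist_eq_sub_of_le h, Nat.cast_sub h, abs_sub_comm, abs_of_nonneg (by simp [h])]

lemma sum_erase_inv_abs_natCast_sub_le {J : Finset ℕ} {N p : ℕ} (hJ : ∀ q ∈ J, q ≤ N)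
    (hp : p ≤ N) : ∑ q ∈ J.erase p, |(p : ℝ) - q|⁻¹ ≤ 2 * harmonic N := by
  have hfiber : ∀ k, #{q ∈ J.erase p | p.dist q = k} ≤ 2 := fun k =>
    calc #{q ∈ J.erase p | p.dist q = k} ≤ #({p - k, p + k} : Finset ℕ) := by
          refine card_le_card fun q hq => ?_
          rw [mem_filter, Nat.dist] at hq
          simp only [mem_insert, mem_singleton]
          omega
      _ ≤ 2 := card_le_two
  have himage : (J.erase p).image p.dist ⊆ Icc 1 N := by
    intro k hk
    obtain ⟨q, hq, rfl⟩ := mem_image.1 hk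
    have := hJ q (mem_of_mem_erase hq)
    have := ne_of_mem_erase hq
    simp only [mem_Icc, Nat.dist]
    omega
  calc ∑ q ∈ J.erase p, |(p : ℝ) - q|⁻¹ = ∑ q ∈ J.erase p, ((p.dist q : ℕ) : ℝ)⁻¹ := by
        simp only [Nat.cast_dist]
    _ = ∑ k ∈ (J.erase p).image p.dist, #{q ∈ J.erase p | p.dist q = k} • ((k : ℝ))⁻¹ :=
        sum_comp (fun k : ℕ => ((k : ℝ))⁻¹) p.dist
    _ ≤ ∑ k ∈ (J.erase p).image p.dist, 2 * ((k : ℝ))⁻¹ := by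
        refine sum_le_sum fun k _ => ?_
        rw [nsmul_eq_mul]
        gcongr
        exact_mod_cast hfiber k
    _ ≤ ∑ k ∈ Icc 1 N, 2 * ((k : ℝ))⁻¹ :=
        sum_le_sum_of_subset_of_nonneg himage fun _ _ _ => by positivity
    _ = 2 * harmonic N := by
        rw [← mul_sum, harmonic_eq_sum_Icc]
        push_cast
        rfl

lemma setIntegral_Icc_neg_cos_mul {T : ℝ} (hT : 0 ≤ T) {b : ℝ} (hb : b ≠ 0) :
    ∫ x in Set.Icc (-T) T, cos (b * x) = 2 * sin (b * T) / b := by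
  rw [integral_Icc_eq_integral_Ioc, ← intervalIntegral.integral_of_le (by linarith),
    intervalIntegral.integral_comp_mul_left (fun x => cos x) hb, integral_cos, smul_eq_mul,
    mul_neg, sin_neg]
  field_simp
  ring

lemma abs_setIntegral_Icc_neg_cos_mul_le_two_div {T : ℝ} (hT : 0 ≤ T) {b : ℝ} (hb : b ≠ 0) :
    |∫ x in Set.Icc (-T) T, cos (b * x)| ≤ 2 / |b| := by
  rw [setIntegral_Icc_neg_cos_mul hT hb, abs_div, abs_mul, abs_two]
  gcongr
  exact mul_le_of_le_one_right zero_le_two (abs_sin_le_one _)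

lemma abs_setIntegral_Icc_neg_cos_mul_le_two_mul {T : ℝ} (hT : 0 ≤ T) (b : ℝ) :
    |∫ x in Set.Icc (-T) T, cos (b * x)| ≤ 2 * T := by
  have h := norm_setIntegral_le_of_norm_le_const (μ := volume) (s := Set.Icc (-T) T)
    (f := fun x => cos (b * x)) (C := 1) measure_Icc_lt_top (fun x _ => abs_cos_le_one _)
  rw [Real.volume_real_Icc_of_le (by linarith), one_mul, Real.norm_eq_abs] at h
  linarith

noncomputable def expSum {ι : Type*} (s : Finset ι) (a ν : ι → ℝ) (x : ℝ) : ℂ :=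
  ∑ p ∈ s, (a p : ℂ) * Complex.exp (2 * π * Complex.I * ((ν p * x : ℝ) : ℂ))

lemma exp_two_pi_I_mul_ofReal (t : ℝ) :
    Complex.exp (2 * π * Complex.I * (t : ℂ)) = Complex.exp ((2 * π * t : ℝ) * Complex.I) := by
  push_cast; ring_nf

section ExpSum

variable {ι : Type*} (s : Finset ι) (a ν : ι → ℝ)

@[fun_prop]
lemma continuous_expSum : Continuous (expSum s a ν) :=
  continuous_finsetSum _ fun _ _ => by fun_prop

lemma norm_expSum_le (x : ℝ) : ‖expSum s a ν x‖ ≤ ∑ p ∈ s, |a p| := by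
  refine (norm_sum_le _ _).trans (sum_le_sum fun p _ => ?_)
  rw [norm_mul, Complex.norm_real, Real.norm_eq_abs, exp_two_pi_I_mul_ofReal,
    Complex.norm_exp_ofReal_mul_I, mul_one]

lemma sq_norm_expSum (x : ℝ) :
    ‖expSum s a ν x‖ ^ 2 = ∑ p ∈ s, ∑ q ∈ s, a p * a q * cos (2 * π * (ν p - ν q) * x) := by
  have hterm : ∀ p q, (a p : ℂ) * Complex.exp (2 * π * Complex.I * ((ν p * x : ℝ) : ℂ)) *
      (starRingEnd ℂ) ((a q : ℂ) * Complex.exp (2 * π * Complex.I * ((ν q * x : ℝ) : ℂ))) =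
      ((a p * a q : ℝ) : ℂ) * Complex.exp ((2 * π * (ν p - ν q) * x : ℝ) * Complex.I) := by
    intro p q
    simp only [exp_two_pi_I_mul_ofReal, map_mul, ← Complex.exp_conj, Complex.conj_ofReal,
      Complex.conj_I]
    rw [mul_mul_mul_comm, ← Complex.exp_add]
    push_cast; ring_nf
  rw [← Complex.ofReal_re (‖_‖ ^ 2), Complex.sq_norm, ← Complex.mul_conj, expSum, map_sum,
    sum_mul_sum, Complex.re_sum]
  refine sum_congr rfl fun p _ => ?_
  rw [Complex.re_sum]
  refine sum_congr rfl fun q _ => ?_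
  rw [hterm, Complex.re_ofReal_mul, Complex.exp_ofReal_mul_I_re]

lemma integral_sq_norm_expSum_eq {T : ℝ} :
    ∫ x in Set.Icc (-T) T, ‖expSum s a ν x‖ ^ 2 =
      ∑ p ∈ s, ∑ q ∈ s, a p * a q * ∫ x in Set.Icc (-T) T, cos (2 * π * (ν p - ν q) * x) := by
  simp_rw [sq_norm_expSum, ← integral_const_mul]
  have hint : ∀ p q, IntegrableOn (fun x => a p * a q * cos (2 * π * (ν p - ν q) * x))
      (Set.Icc (-T) T) := fun p q => Continuous.integrableOn_Icc (by fun_prop)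
  rw [integral_finsetSum _ fun p _ => integrable_finsetSum _ fun q _ => hint p q]
  exact sum_congr rfl fun p _ => integral_finsetSum _ fun q _ => hint p q

lemma integral_sq_norm_expSum_le [DecidableEq ι] {T A : ℝ} (hT : 0 ≤ T) (hA : ∀ p ∈ s, |a p| ≤ A)
    (hν : Set.InjOn ν s) :
    ∫ x in Set.Icc (-T) T, ‖expSum s a ν x‖ ^ 2 ≤
      A ^ 2 * ∑ p ∈ s, (2 * T + ∑ q ∈ s.erase p, (π * |ν p - ν q|)⁻¹) := by
  have hterm : ∀ p ∈ s, ∀ q ∈ s, ∀ J : ℝ, a p * a q * J ≤ A ^ 2 * |J| := fun p hp q hq J =>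
    calc a p * a q * J ≤ |a p| * |a q| * |J| := by
          rw [← abs_mul, ← abs_mul]; exact le_abs_self _
      _ ≤ A ^ 2 * |J| := by
          rw [sq]; gcongr
          · exact (abs_nonneg _).trans (hA p hp)
          exacts [hA p hp, hA q hq]
  rw [integral_sq_norm_expSum_eq, mul_sum]
  refine sum_le_sum fun p hp => ?_
  rw [← add_sum_erase _ _ hp, mul_add, mul_sum]
  refine add_le_add ((hterm p hp p hp _).trans ?_) (sum_le_sum fun q hq => ?_)
  · gcongr
    exact abs_setIntegral_Icc_neg_cos_mul_le_two_mul hT _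
  · have hne : ν p - ν q ≠ 0 :=
      sub_ne_zero.2 fun h => ne_of_mem_erase hq (hν (mem_of_mem_erase hq) hp h.symm)
    refine (hterm p hp q (mem_of_mem_erase hq) _).trans ?_
    gcongr
    refine (abs_setIntegral_Icc_neg_cos_mul_le_two_div hT (by positivity)).trans_eq ?_
    rw [abs_mul, abs_of_pos (by positivity : (0 : ℝ) < 2 * π)]
    field_simp

end ExpSum

lemma integral_sq_norm_expSum_le_of_spacing {s : Finset ℕ} {a ν : ℕ → ℝ} {N : ℕ} {T A δ : ℝ}
    (hT : 0 ≤ T) (hA : ∀ p ∈ s, |a p| ≤ A) (hs : ∀ p ∈ s, p ≤ N) (hδ : 0 < δ)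
    (hν : ∀ p ∈ s, ∀ q ∈ s, δ * |(p : ℝ) - q| ≤ |ν p - ν q|) :
    ∫ x in Set.Icc (-T) T, ‖expSum s a ν x‖ ^ 2 ≤
      A ^ 2 * (#s * (2 * T + 2 * harmonic N / (π * δ))) := by
  have hinj : Set.InjOn ν s := fun p hp q hq h => by
    have h' := hν p hp q hq
    rw [h, sub_self, abs_zero] at h'
    exact_mod_cast sub_eq_zero.1 (abs_nonpos_iff.1 (nonpos_of_mul_nonpos_right h' hδ))
  refine (integral_sq_norm_expSum_le s a ν hT hA hinj).trans ?_
  rw [← nsmul_eq_mul]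
  gcongr
  refine sum_le_card_nsmul _ _ _ fun p hp => add_le_add_right ?_ _
  calc ∑ q ∈ s.erase p, (π * |ν p - ν q|)⁻¹
      ≤ ∑ q ∈ s.erase p, (π * δ)⁻¹ * |(p : ℝ) - q|⁻¹ := by
        refine sum_le_sum fun q hq => ?_
        have hpq : 0 < |(p : ℝ) - q| :=
          abs_pos.2 (sub_ne_zero.2 (by exact_mod_cast (ne_of_mem_erase hq).symm))
        rw [← mul_inv, mul_assoc]
        exact inv_anti₀ (by positivity)
          (mul_le_mul_of_nonneg_left (hν p hp q (mem_of_mem_erase hq)) pi_pos.le)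
    _ ≤ (π * δ)⁻¹ * (2 * harmonic N) := by
        rw [← mul_sum]
        gcongr
        exact sum_erase_inv_abs_natCast_sub_le hs (hs p hp)
    _ = 2 * harmonic N / (π * δ) := by ring

lemma setIntegral_Icc_pow_four_norm_le {f : ℝ → ℂ} (hf : Continuous f) {M : ℝ}
    (hM : ∀ x, ‖f x‖ ≤ M) (u v : ℝ) :
    ∫ x in Set.Icc u v, ‖f x‖ ^ 4 ≤ M ^ 2 * ∫ x in Set.Icc u v, ‖f x‖ ^ 2 := by
  rw [← integral_const_mul]
  refine setIntegral_mono_on (Continuous.integrableOn_Icc (by fun_prop))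
    (Continuous.integrableOn_Icc (by fun_prop)) measurableSet_Icc fun x _ => ?_
  have hsq : ‖f x‖ ^ 2 ≤ M ^ 2 := pow_le_pow_left₀ (norm_nonneg _) (hM x) 2
  calc ‖f x‖ ^ 4 = ‖f x‖ ^ 2 * ‖f x‖ ^ 2 := by ring
    _ ≤ M ^ 2 * ‖f x‖ ^ 2 := by gcongr

noncomputable def dyadicPrimes (X : ℝ) : Finset ℕ := (Ioc ⌊X⌋₊ ⌊2 * X⌋₊).filter Nat.Prime

section DyadicPrimes

variable {X : ℝ} {p : ℕ}

lemma lt_of_mem_dyadicPrimes (hX : 0 ≤ X) (hp : p ∈ dyadicPrimes X) : X < p :=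
  (Nat.floor_lt hX).1 (mem_Ioc.1 (mem_filter.1 hp).1).1

lemma le_floor_of_mem_dyadicPrimes (hp : p ∈ dyadicPrimes X) : p ≤ ⌊2 * X⌋₊ :=
  (mem_Ioc.1 (mem_filter.1 hp).1).2

lemma le_two_mul_of_mem_dyadicPrimes (hX : 0 ≤ X) (hp : p ∈ dyadicPrimes X) : (p : ℝ) ≤ 2 * X :=
  (Nat.le_floor_iff (by linarith)).1 (le_floor_of_mem_dyadicPrimes hp)

lemma abs_log_le_of_mem_dyadicPrimes (hX : 0 ≤ X) (hp : p ∈ dyadicPrimes X) :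
    |log p| ≤ log (2 * X) := by
  have h1 : (1 : ℝ) ≤ p := by exact_mod_cast (mem_filter.1 hp).2.one_le
  rw [abs_of_nonneg (log_nonneg h1)]
  exact log_le_log (by linarith) (le_two_mul_of_mem_dyadicPrimes hX hp)

lemma card_dyadicPrimes_le (hX : 0 ≤ X) : (#(dyadicPrimes X) : ℝ) ≤ 2 * X := by
  have h : #(dyadicPrimes X) ≤ ⌊2 * X⌋₊ :=
    calc #(dyadicPrimes X) ≤ #(Ioc ⌊X⌋₊ ⌊2 * X⌋₊) := card_filter_le _ _
      _ = ⌊2 * X⌋₊ - ⌊X⌋₊ := Nat.card_Ioc _ _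
      _ ≤ ⌊2 * X⌋₊ := Nat.sub_le _ _
  exact (Nat.cast_le.2 h).trans (Nat.floor_le (by linarith))

end DyadicPrimes

lemma one_le_log_of_three_le {X : ℝ} (hX : 3 ≤ X) : 1 ≤ log X := by
  rw [le_log_iff_exp_le (by linarith)]
  linarith [exp_one_lt_d9]

lemma log_two_mul_le {X : ℝ} (hX : 2 ≤ X) : log (2 * X) ≤ 2 * log X := by
  rw [log_mul two_ne_zero (by linarith), two_mul]
  gcongr

section PrimeExpSum

variable {c X : ℝ}

lemma norm_expSum_dyadicPrimes_le (hX : 2 ≤ X) (ν : ℕ → ℝ) (x : ℝ) :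
    ‖expSum (dyadicPrimes X) (fun p => log p) ν x‖ ≤ 4 * X * log X :=
  calc ‖expSum (dyadicPrimes X) (fun p => log p) ν x‖ ≤ ∑ p ∈ dyadicPrimes X, |log p| :=
        norm_expSum_le _ _ _ x
    _ ≤ #(dyadicPrimes X) * (2 * log X) := by
        rw [← nsmul_eq_mul]
        exact sum_le_card_nsmul _ _ _ fun p hp =>
          (abs_log_le_of_mem_dyadicPrimes (by linarith) hp).trans (log_two_mul_le hX)
    _ ≤ 2 * X * (2 * log X) := by
        gcongr
        · exact mul_nonneg zero_le_two (log_nonneg (by linarith))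
        · exact card_dyadicPrimes_le (by linarith)
    _ = 4 * X * log X := by ring

lemma harmonic_floor_two_mul_le (hX : 3 ≤ X) : (harmonic ⌊2 * X⌋₊ : ℝ) ≤ 3 * log X := by
  have hN : (0 : ℝ) < ⌊2 * X⌋₊ := by
    exact_mod_cast Nat.floor_pos.2 (by linarith)
  calc (harmonic ⌊2 * X⌋₊ : ℝ) ≤ 1 + log ⌊2 * X⌋₊ := harmonic_le_one_add_log _
    _ ≤ 1 + 2 * log X := by
        gcongr
        exact (log_le_log hN (Nat.floor_le (by linarith))).trans (log_two_mul_le (by linarith))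
    _ ≤ 3 * log X := by linarith [one_le_log_of_three_le hX]

lemma two_mul_harmonic_floor_div_le (hc : 1 < c) (hX : 3 ≤ X) :
    2 * (harmonic ⌊2 * X⌋₊ : ℝ) / (π * (c * X ^ (c - 1))) ≤ 2 * log X * X ^ (1 - c) := by
  have hX0 : 0 < X := by linarith
  have hXc : X ^ (1 - c) * X ^ (c - 1) = 1 := by
    rw [← rpow_add hX0, show 1 - c + (c - 1) = 0 by ring, rpow_zero]
  have hπc : 3 ≤ π * c := by nlinarith [pi_gt_three]
  have hℓ : 0 ≤ log X := log_nonneg (by linarith)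
  rw [div_le_iff₀ (by positivity)]
  calc 2 * (harmonic ⌊2 * X⌋₊ : ℝ) ≤ 2 * (3 * log X) := by
        gcongr; exact harmonic_floor_two_mul_le hX
    _ = 2 * log X * X ^ (1 - c) * (3 * X ^ (c - 1)) := by
        linear_combination (-6 * log X) * hXc
    _ ≤ 2 * log X * X ^ (1 - c) * (π * c * X ^ (c - 1)) := by gcongr
    _ = 2 * log X * X ^ (1 - c) * (π * (c * X ^ (c - 1))) := by ring

lemma integral_sq_norm_expSum_dyadicPrimes_le {η : ℝ} (hc : 1 < c) (hη : 0 ≤ η) (hX : 3 ≤ X) :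
    ∫ x in Set.Icc (-(X ^ (1 - c - η))) (X ^ (1 - c - η)),
        ‖expSum (dyadicPrimes X) (fun p => log p) (fun p => (p : ℝ) ^ c) x‖ ^ 2 ≤
      32 * X ^ (2 - c) * log X ^ 3 := by
  have hX0 : 0 < X := by linarith
  have hℓ : 1 ≤ log X := one_le_log_of_three_le hX
  have hgap : ∀ p ∈ dyadicPrimes X, ∀ q ∈ dyadicPrimes X,
      c * X ^ (c - 1) * |(p : ℝ) - q| ≤ |(p : ℝ) ^ c - (q : ℝ) ^ c| := fun p hp q hq =>
    mul_rpow_sub_one_mul_abs_sub_le_abs_rpow_sub_rpow hc.le hX0.le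
      (lt_of_mem_dyadicPrimes hX0.le hp).le (lt_of_mem_dyadicPrimes hX0.le hq).le
  refine (integral_sq_norm_expSum_le_of_spacing (rpow_nonneg hX0.le _)
    (fun p hp => abs_log_le_of_mem_dyadicPrimes hX0.le hp)
    (fun p hp => le_floor_of_mem_dyadicPrimes hp) (by positivity) hgap).trans ?_
  have hT : X ^ (1 - c - η) ≤ X ^ (1 - c) := rpow_le_rpow_of_exponent_le (by linarith) (by linarith)
  have hH := two_mul_harmonic_floor_div_le hc hX
  have hX2c : X ^ (2 - c) = X * X ^ (1 - c) := by
    rw [show 2 - c = 1 + (1 - c) by ring, rpow_add hX0, rpow_one]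
  calc log (2 * X) ^ 2 * (#(dyadicPrimes X) * (2 * X ^ (1 - c - η) +
        2 * (harmonic ⌊2 * X⌋₊ : ℝ) / (π * (c * X ^ (c - 1)))))
      ≤ (2 * log X) ^ 2 * (2 * X * (2 * X ^ (1 - c) + 2 * log X * X ^ (1 - c))) := by
        have hlog : 0 ≤ log (2 * X) := log_nonneg (by linarith)
        have hH0 : 0 ≤ 2 * (harmonic ⌊2 * X⌋₊ : ℝ) / (π * (c * X ^ (c - 1))) := by
          have : (0 : ℝ) ≤ harmonic ⌊2 * X⌋₊ := by
            rw [harmonic_eq_sum_Icc]; push_cast; positivity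
          positivity
        gcongr
        · exact log_two_mul_le (by linarith)
        · exact card_dyadicPrimes_le hX0.le
    _ = 16 * (X * X ^ (1 - c)) * (log X ^ 2 * (1 + log X)) := by ring
    _ ≤ 16 * X ^ (2 - c) * (log X ^ 2 * (2 * log X)) := by rw [hX2c]; gcongr; linarith
    _ = 32 * X ^ (2 - c) * log X ^ 3 := by ring

end PrimeExpSum

theorem stmt_4_general (c η : ℝ) (hc1 : 1 < c) (hη : 0 < η) :
    ∃ C X₀ : ℝ, 0 < C ∧ ∀ X : ℝ, X₀ ≤ X →
      (∫ x in Set.Icc (-(X ^ (1 - c - η))) (X ^ (1 - c - η)),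
        ‖∑ p ∈ (Finset.Ioc ⌊X⌋₊ ⌊2 * X⌋₊).filter Nat.Prime,
          (Real.log p : ℂ) * Complex.exp (2 * Real.pi * Complex.I * (((p : ℝ) ^ c * x : ℝ) : ℂ))‖ ^ 4) ≤
      C * X ^ (4 - c) * Real.log X ^ 5 := by
  refine ⟨512, 3, by norm_num, fun X hX => ?_⟩
  have hX0 : 0 < X := by linarith
  let S := expSum (dyadicPrimes X) (fun p => log p) (fun p => (p : ℝ) ^ c)
  have hX4c : X ^ (4 - c) = X ^ 2 * X ^ (2 - c) := by
    rw [show 4 - c = 2 + (2 - c) by ring, rpow_add hX0, rpow_two]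
  calc ∫ x in Set.Icc (-(X ^ (1 - c - η))) (X ^ (1 - c - η)), ‖S x‖ ^ 4
      ≤ (4 * X * log X) ^ 2 * ∫ x in Set.Icc (-(X ^ (1 - c - η))) (X ^ (1 - c - η)), ‖S x‖ ^ 2 :=
        setIntegral_Icc_pow_four_norm_le (continuous_expSum _ _ _)
          (norm_expSum_dyadicPrimes_le (by linarith) _) _ _
    _ ≤ (4 * X * log X) ^ 2 * (32 * X ^ (2 - c) * log X ^ 3) := by
        gcongr
        exact integral_sq_norm_expSum_dyadicPrimes_le hc1 hη.le hX
    _ = 512 * X ^ (4 - c) * log X ^ 5 := by rw [hX4c]; ring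

/-- Fourth moment of the prime exponential sum `S(x)` over the minor interval `[-τ, τ]`. -/
theorem stmt_4 (c η : ℝ) (hc1 : 1 < c) (hc3 : c < 3) (hc2 : c ≠ 2) (hη : 0 < η) :
    ∃ C X₀ : ℝ, 0 < C ∧ ∀ X : ℝ, X₀ ≤ X →
      (∫ x in Set.Icc (-(X ^ (1 - c - η))) (X ^ (1 - c - η)),
        ‖∑ p ∈ (Finset.Ioc ⌊X⌋₊ ⌊2 * X⌋₊).filter Nat.Prime,
          (Real.log p : ℂ) * Complex.exp (2 * Real.pi * Complex.I * (((p : ℝ) ^ c * x : ℝ) : ℂ))‖ ^ 4) ≤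
      C * X ^ (4 - c) * Real.log X ^ 5 :=
  stmt_4_general c η hc1 hη
end

section
/- Let 1 < c < 3 with c ≠ 2, X a large real number, τ = X^{1−c−η} for fixed small η > 0, and I(x) = ∫_X^{2X} e(t^c x) dt. Then ∫_{−τ}^{τ} |I(x)|⁴ dx ≪ X^{4−c} (log X)⁵. -/
open MeasureTheory intervalIntegral

section Aux
open Real Complex

noncomputable def II (c x X : ℝ) : ℂ :=
  ∫ t in X..(2 * X), Complex.exp (2 * Real.pi * Complex.I * ((t ^ c * x : ℝ) : ℂ))

-- trivial bound
lemma triv_bound (c x X : ℝ) (hX : 0 ≤ X) : ‖II c x X‖ ≤ X := by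
  have := intervalIntegral.norm_integral_le_of_norm_le_const (a := X) (b := 2*X) (C := 1)
    (f := fun t => Complex.exp (2 * Real.pi * Complex.I * ((t ^ c * x : ℝ) : ℂ))) ?_
  · calc ‖II c x X‖ ≤ 1 * |2*X - X| := this
    _ = X := by rw [one_mul]; rw [_root_.abs_of_nonneg (by linarith : (0:ℝ) ≤ 2*X - X)]; ring
  · intro t _
    rw [Complex.norm_exp]
    have : (2 * (Real.pi:ℂ) * Complex.I * ((t ^ c * x : ℝ) : ℂ)).re = 0 := by
      simp [Complex.mul_re, Complex.mul_im]
    rw [this, Real.exp_zero]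

lemma decay_bound (c : ℝ) (hc1 : 1 < c) (x X : ℝ) (hx : x ≠ 0) (hX : 1 ≤ X) :
    ‖II c x X‖ ≤ |x|⁻¹ * X ^ (1 - c) := by
  have hX0 : (0:ℝ) < X := lt_of_lt_of_le one_pos hX
  have hXle : X ≤ 2 * X := by linarith
  set K : ℂ := 2 * Real.pi * Complex.I * x with hKdef
  have hK : K ≠ 0 := by
    simp [hKdef, Complex.ext_iff, Real.pi_ne_zero, hx, Complex.I_ne_zero]
  have hc0 : (c:ℂ) ≠ 0 := by
    exact_mod_cast (by positivity : (0:ℝ) < c).ne'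
  set g : ℝ → ℂ := fun t => Complex.exp (2 * Real.pi * Complex.I * ((t ^ c * x : ℝ) : ℂ)) with hgdef
  have hg_eq : ∀ t : ℝ, g t = Complex.exp (K * ((t ^ c : ℝ) : ℂ)) := by
    intro t; simp only [hgdef, hKdef]; push_cast; ring_nf
  set F : ℝ → ℂ := fun t => g t / (K * c * ((t ^ (c-1) : ℝ) : ℂ)) with hFdef
  set G : ℝ → ℂ := fun t => g t - ((c-1)/(K*c)) * (g t * ((t ^ (-c) : ℝ) : ℂ)) with hGdef
  have hgnorm : ∀ t : ℝ, ‖g t‖ = 1 := by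
    intro t
    rw [hgdef]
    rw [Complex.norm_exp]
    have : (2 * (Real.pi:ℂ) * Complex.I * ((t ^ c * x : ℝ) : ℂ)).re = 0 := by
      simp [Complex.mul_re, Complex.mul_im]
    rw [this, Real.exp_zero]
  have hden_ne : ∀ t : ℝ, 0 < t → K * c * ((t ^ (c-1) : ℝ) : ℂ) ≠ 0 := by
    intro t ht
    have : (t:ℝ) ^ (c-1) ≠ 0 := (Real.rpow_pos_of_pos ht _).ne'
    simp [hK, hc0, this]
  -- derivative of F
  have hderiv : ∀ t ∈ Set.uIcc X (2*X), HasDerivAt F (G t) t := by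
    intro t ht
    rw [Set.uIcc_of_le hXle] at ht
    have ht0 : 0 < t := lt_of_lt_of_le hX0 ht.1
    have h1 : HasDerivAt (fun s : ℝ => ((s ^ c : ℝ) : ℂ)) ((c * t ^ (c-1) : ℝ) : ℂ) t :=
      (Real.hasDerivAt_rpow_const (Or.inl ht0.ne')).ofReal_comp
    have h3 : HasDerivAt (fun s : ℝ => Complex.exp (K * ((s ^ c : ℝ) : ℂ)))
        (K * ((c * t ^ (c-1) : ℝ) : ℂ) * Complex.exp (K * ((t ^ c : ℝ) : ℂ))) t := by
      simpa [mul_comm, mul_assoc] using (h1.const_mul K).cexp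
    have h4 : HasDerivAt (fun s : ℝ => ((s ^ (c-1) : ℝ) : ℂ)) (((c-1) * t ^ (c-1-1) : ℝ) : ℂ) t :=
      (Real.hasDerivAt_rpow_const (Or.inl ht0.ne')).ofReal_comp
    have h5 : HasDerivAt (fun s : ℝ => K * c * ((s ^ (c-1) : ℝ) : ℂ))
        (K * c * (((c-1) * t ^ (c-1-1) : ℝ) : ℂ)) t := h4.const_mul _
    have hg' : HasDerivAt (fun s : ℝ => g s) (K * ((c * t ^ (c-1) : ℝ) : ℂ) * g t) t := by
      simp only [hg_eq]
      exact h3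
    have hF : HasDerivAt F
        ((K * ((c * t ^ (c-1) : ℝ) : ℂ) * g t * (K * c * ((t ^ (c-1) : ℝ) : ℂ))
          - g t * (K * c * (((c-1) * t ^ (c-1-1) : ℝ) : ℂ)))
          / (K * c * ((t ^ (c-1) : ℝ) : ℂ))^2) t := hg'.div h5 (hden_ne t ht0)
    convert hF using 1
    rw [hGdef]
    have e1 : (t:ℝ) ^ (c-1) * t ^ (c-1) = t ^ (c-1-1) * t ^ c := by
      rw [← Real.rpow_add ht0, ← Real.rpow_add ht0]; ring_nf
    have e2 : (t:ℝ) ^ (-c) * t ^ c = 1 := by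
      rw [← Real.rpow_add ht0]; simp
    have e3 : (t:ℝ) ^ (c-1-1) = t ^ (-c) * (t ^ (c-1) * t ^ (c-1)) := by
      rw [← Real.rpow_add ht0, ← Real.rpow_add ht0]; congr 1; ring
    have hpow_ne : ((t ^ (c-1) : ℝ) : ℂ) ≠ 0 := by
      exact_mod_cast (Real.rpow_pos_of_pos ht0 _).ne'
    field_simp
    push_cast [e3]
    ring
  -- integrability of the pieces
  have hcont_g : Continuous g := by
    rw [hgdef]
    have h1 : Continuous fun t : ℝ => t ^ c := Real.continuous_rpow_const (by linarith)
    exact Complex.continuous_exp.comp (by continuity)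
  have hcont_pow : ContinuousOn (fun t : ℝ => ((t ^ (-c) : ℝ) : ℂ)) (Set.uIcc X (2*X)) := by
    intro t ht
    rw [Set.uIcc_of_le hXle] at ht
    have ht0 : t ≠ 0 := (lt_of_lt_of_le hX0 ht.1).ne'
    exact (Complex.continuous_ofReal.continuousAt.comp
      (Real.continuousAt_rpow_const t _ (Or.inl ht0))).continuousWithinAt
  have hint2 : IntervalIntegrable (fun t => g t * ((t ^ (-c) : ℝ) : ℂ)) volume X (2*X) :=
    (hcont_g.continuousOn.mul hcont_pow).intervalIntegrable
  have hintG : IntervalIntegrable G volume X (2*X) :=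
    (hcont_g.intervalIntegrable X (2*X)).sub (hint2.const_mul _)
  have hFTC : ∫ t in X..(2*X), G t = F (2*X) - F X :=
    intervalIntegral.integral_eq_sub_of_hasDerivAt hderiv hintG
  have hgid : ∀ t : ℝ, g t = G t + ((c:ℂ)-1)/(K*c) * (g t * ((t ^ (-c) : ℝ) : ℂ)) := by
    intro t; simp only [hGdef]; ring
  have hII : II c x X = ∫ t in X..(2*X), g t := rfl
  have hsplit : II c x X = (F (2*X) - F X)
      + ((c:ℂ)-1)/(K*c) * ∫ t in X..(2*X), g t * ((t ^ (-c) : ℝ) : ℂ) := by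
    rw [hII, ← hFTC, ← intervalIntegral.integral_const_mul,
      ← intervalIntegral.integral_add hintG (hint2.const_mul _)]
    exact intervalIntegral.integral_congr (fun t _ => hgid t)
  -- norms
  have hxpos : 0 < |x| := abs_pos.mpr hx
  have hcpos : 0 < c := by linarith
  have hKnorm : ‖K‖ = 2 * Real.pi * |x| := by
    simp [hKdef, map_mul, Complex.norm_real, Real.norm_eq_abs, Complex.norm_I,
      _root_.abs_of_pos Real.pi_pos]
  have hXp : 0 < X ^ (1-c) := Real.rpow_pos_of_pos hX0 _
  have hX1c : X ^ (1-c) = (X ^ (c-1))⁻¹ := by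
    rw [← Real.rpow_neg hX0.le]; congr 1; ring
  have hFnorm : ∀ t : ℝ, X ≤ t → ‖F t‖ ≤ (2*Real.pi*|x| * c)⁻¹ * X ^ (1-c) := by
    intro t htX
    have ht0 : 0 < t := lt_of_lt_of_le hX0 htX
    have htpow : 0 < t ^ (c-1) := Real.rpow_pos_of_pos ht0 _
    have hXpow : 0 < X ^ (c-1) := Real.rpow_pos_of_pos hX0 _
    have hle : X ^ (c-1) ≤ t ^ (c-1) := Real.rpow_le_rpow hX0.le htX (by linarith)
    have : ‖F t‖ = (2*Real.pi*|x| * (c * t ^ (c-1)))⁻¹ := by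
      rw [hFdef]
      simp only [norm_div, hgnorm, norm_mul, hKnorm, Complex.norm_real, Real.norm_eq_abs,
        Complex.norm_natCast]
      rw [_root_.abs_of_pos hcpos, _root_.abs_of_pos htpow]
      rw [one_div]
      ring_nf
    rw [this, hX1c]
    rw [show (2*Real.pi*|x| * (c * t ^ (c-1)))⁻¹ = (2*Real.pi*|x| * c)⁻¹ * (t ^ (c-1))⁻¹ by
      rw [← mul_inv]; ring_nf]
    gcongr
  have hint2norm : ‖∫ t in X..(2*X), g t * ((t ^ (-c) : ℝ) : ℂ)‖ ≤ X ^ (1-c) := by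
    have hb := intervalIntegral.norm_integral_le_of_norm_le_const (a := X) (b := 2*X)
      (C := X ^ (-c)) (f := fun t => g t * ((t ^ (-c) : ℝ) : ℂ)) ?_
    · calc ‖∫ t in X..(2*X), g t * ((t ^ (-c) : ℝ) : ℂ)‖ ≤ X ^ (-c) * |2*X - X| := hb
      _ = X ^ (-c) * X ^ (1:ℝ) := by
          rw [_root_.abs_of_nonneg (by linarith : (0:ℝ) ≤ 2*X - X), Real.rpow_one]; ring_nf
      _ = X ^ (1-c) := by rw [← Real.rpow_add hX0]; congr 1; ring
    · intro t ht
      rw [Set.uIoc_of_le hXle] at ht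
      have ht0 : 0 < t := lt_trans hX0 ht.1
      have : ‖g t * ((t ^ (-c) : ℝ) : ℂ)‖ = t ^ (-c) := by
        rw [norm_mul, hgnorm, one_mul, Complex.norm_real, Real.norm_eq_abs,
          _root_.abs_of_pos (Real.rpow_pos_of_pos ht0 _)]
      rw [this]
      exact Real.rpow_le_rpow_of_nonpos hX0 ht.1.le (by linarith)
  have hquotnorm : ‖((c:ℂ)-1)/(K*c)‖ = (c-1) / (2*Real.pi*|x| * c) := by
    rw [norm_div, norm_mul, hKnorm]
    have h1 : ((c:ℂ) - 1) = ((c - 1 : ℝ) : ℂ) := by push_cast; ring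
    rw [h1]
    simp only [Complex.norm_real, Real.norm_eq_abs]
    rw [_root_.abs_of_nonneg (by linarith : (0:ℝ) ≤ c - 1), _root_.abs_of_pos hcpos]
  have main : (2 + (c-1)) / (2*Real.pi*|x| * c) ≤ |x|⁻¹ := by
    rw [div_le_iff₀ (by positivity)]
    have hid : |x|⁻¹ * (2*Real.pi*|x| * c) = 2*Real.pi*c := by
      field_simp
    rw [hid]
    nlinarith [Real.pi_gt_three]
  calc ‖II c x X‖
      ≤ ‖F (2*X) - F X‖ + ‖((c:ℂ)-1)/(K*c)‖ * ‖∫ t in X..(2*X), g t * ((t ^ (-c) : ℝ) : ℂ)‖ := by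
        rw [hsplit]
        exact le_trans (norm_add_le _ _) (by rw [norm_mul])
    _ ≤ (‖F (2*X)‖ + ‖F X‖) + (c-1) / (2*Real.pi*|x| * c) * X ^ (1-c) := by
        have h1 : ‖F (2*X) - F X‖ ≤ ‖F (2*X)‖ + ‖F X‖ := norm_sub_le _ _
        have h2 : ‖((c:ℂ)-1)/(K*c)‖ * ‖∫ t in X..(2*X), g t * ((t ^ (-c) : ℝ) : ℂ)‖
            ≤ (c-1) / (2*Real.pi*|x| * c) * X ^ (1-c) := by
          rw [hquotnorm]
          exact mul_le_mul_of_nonneg_left hint2norm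
            (div_nonneg (by linarith) (by positivity))
        linarith
    _ ≤ ((2*Real.pi*|x| * c)⁻¹ * X ^ (1-c) + (2*Real.pi*|x| * c)⁻¹ * X ^ (1-c))
        + (c-1) / (2*Real.pi*|x| * c) * X ^ (1-c) := by
        gcongr
        · exact hFnorm (2*X) (by linarith)
        · exact hFnorm X le_rfl
    _ = (2 + (c-1)) / (2*Real.pi*|x| * c) * X ^ (1-c) := by
        field_simp
        ring
    _ ≤ |x|⁻¹ * X ^ (1-c) := mul_le_mul_of_nonneg_right main hXp.le

end Aux

/-- Fourth moment of the exponential integral `I(x)` over the minor interval `[-τ, τ]`. -/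
theorem stmt_5 (c η : ℝ) (hc1 : 1 < c) (hc3 : c < 3) (hc2 : c ≠ 2) (hη : 0 < η) :
    ∃ C X₀ : ℝ, 0 < C ∧ ∀ X : ℝ, X₀ ≤ X →
      (∫ x in Set.Icc (-(X ^ (1 - c - η))) (X ^ (1 - c - η)),
        ‖∫ t in X..(2 * X), Complex.exp (2 * Real.pi * Complex.I * ((t ^ c * x : ℝ) : ℂ))‖ ^ 4) ≤
      C * X ^ (4 - c) * Real.log X ^ 5 := by
  refine ⟨3, 3, by norm_num, fun X hX => ?_⟩
  have hX1 : (1:ℝ) ≤ X := by linarith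
  have hX0 : (0:ℝ) < X := by linarith
  set τ := X ^ (1 - c - η) with hτdef
  set δ := X ^ (-c) with hδdef
  set M := max τ δ with hMdef
  have hτ0 : 0 < τ := Real.rpow_pos_of_pos hX0 _
  have hδ0 : 0 < δ := Real.rpow_pos_of_pos hX0 _
  have hδM : δ ≤ M := le_max_right _ _
  have hτM : τ ≤ M := le_max_left _ _
  have hM0 : 0 < M := lt_of_lt_of_le hδ0 hδM
  set A := (X ^ (1 - c)) ^ (4:ℕ) with hAdef
  have hA0 : (0:ℝ) ≤ A := by positivity
  set g₀ : ℝ → ℝ := fun x => min (X ^ (4:ℕ)) (A * (x ^ (4:ℕ))⁻¹) with hg₀def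
  have hg₀nonneg : ∀ x, 0 ≤ g₀ x := fun x => le_min (by positivity) (by positivity)
  have hg₀le : ∀ x, g₀ x ≤ X ^ (4:ℕ) := fun x => min_le_left _ _
  have hg₀meas : Measurable g₀ := by
    apply Measurable.min measurable_const
    exact ((measurable_id.pow_const 4).inv).const_mul A
  have hg₀bdd : ∀ᵐ x : ℝ ∂volume, ‖g₀ x‖ ≤ X ^ (4:ℕ) :=
    ae_of_all _ fun x => by
      rw [Real.norm_eq_abs, _root_.abs_of_nonneg (hg₀nonneg x)]; exact hg₀le x
  have hg₀int : ∀ a b : ℝ, IntervalIntegrable g₀ volume a b := by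
    intro a b
    rw [intervalIntegrable_iff]
    exact Measure.integrableOn_of_bounded (by simp [Set.uIoc])
      hg₀meas.aestronglyMeasurable (ae_restrict_of_ae hg₀bdd)
  have hIccInt : ∀ a b : ℝ, IntegrableOn g₀ (Set.Icc a b) volume := fun a b =>
    Measure.integrableOn_of_bounded measure_Icc_lt_top.ne hg₀meas.aestronglyMeasurable
      (ae_restrict_of_ae hg₀bdd)
  -- step 1 : compare with g₀
  have hstep1 : (∫ x in Set.Icc (-τ) τ,
      ‖∫ t in X..(2 * X), Complex.exp (2 * Real.pi * Complex.I * ((t ^ c * x : ℝ) : ℂ))‖ ^ 4)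
      ≤ ∫ x in Set.Icc (-τ) τ, g₀ x := by
    apply integral_mono_of_nonneg (ae_of_all _ fun x => by positivity) (hIccInt _ _)
    have h0 : ∀ᵐ x : ℝ ∂(volume.restrict (Set.Icc (-τ) τ)), x ≠ 0 := by
      refine ae_restrict_of_ae ?_
      rw [ae_iff]
      have : {x : ℝ | ¬ x ≠ 0} = {0} := by ext y; simp
      rw [this]
      exact measure_singleton 0
    filter_upwards [h0] with x hx0
    refine le_min ?_ ?_
    · exact pow_le_pow_left₀ (norm_nonneg _) (triv_bound c x X hX0.le) 4
    · have hd := decay_bound c hc1 x X hx0 hX1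
      calc ‖II c x X‖ ^ (4:ℕ) ≤ (|x|⁻¹ * X ^ (1-c)) ^ (4:ℕ) :=
            pow_le_pow_left₀ (norm_nonneg _) hd 4
        _ = A * (x ^ (4:ℕ))⁻¹ := by
            rw [mul_pow, inv_pow, ← _root_.abs_pow,
              _root_.abs_of_nonneg (by positivity : (0:ℝ) ≤ x ^ (4:ℕ)), hAdef]
            ring
  -- step 2 : enlarge the interval
  have hstep2 : (∫ x in Set.Icc (-τ) τ, g₀ x) ≤ ∫ x in Set.Icc (-M) M, g₀ x :=
    setIntegral_mono_set (hIccInt _ _) (ae_restrict_of_ae (ae_of_all _ hg₀nonneg))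
      (HasSubset.Subset.eventuallyLE (Set.Icc_subset_Icc (neg_le_neg hτM) hτM))
  have hIcc : (∫ x in Set.Icc (-M) M, g₀ x) = ∫ x in (-M)..M, g₀ x := by
    rw [intervalIntegral.integral_of_le (by linarith), integral_Icc_eq_integral_Ioc]
  have e1 : ((∫ x in (-δ)..δ, g₀ x) + ∫ x in δ..M, g₀ x) = ∫ x in (-δ)..M, g₀ x :=
    integral_add_adjacent_intervals (hg₀int _ _) (hg₀int _ _)
  have e2 : ((∫ x in (-M)..(-δ), g₀ x) + ∫ x in (-δ)..M, g₀ x) = ∫ x in (-M)..M, g₀ x :=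
    integral_add_adjacent_intervals (hg₀int _ _) (hg₀int _ _)
  -- middle piece
  have hmid : (∫ x in (-δ)..δ, g₀ x) ≤ 2 * δ * X ^ (4:ℕ) := by
    calc (∫ x in (-δ)..δ, g₀ x) ≤ ∫ _x in (-δ)..δ, X ^ (4:ℕ) :=
          intervalIntegral.integral_mono_on (by linarith) (hg₀int _ _)
            intervalIntegrable_const (fun x _ => hg₀le x)
      _ = 2 * δ * X ^ (4:ℕ) := by
          rw [intervalIntegral.integral_const, smul_eq_mul]; ring
  -- zpow identity
  have hzpow_id : ∀ x : ℝ, A * x ^ (-4:ℤ) = A * (x ^ (4:ℕ))⁻¹ := by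
    intro x; rw [zpow_neg]; norm_cast
  -- right piece
  have hnotr : (0:ℝ) ∉ Set.uIcc δ M := by
    rw [Set.uIcc_of_le hδM]; intro h; exact absurd h.1 (by linarith)
  have hright : (∫ x in δ..M, g₀ x) ≤ A * δ ^ (-3:ℤ) / 3 := by
    calc (∫ x in δ..M, g₀ x) ≤ ∫ x in δ..M, A * x ^ (-4:ℤ) := by
          apply intervalIntegral.integral_mono_on hδM (hg₀int _ _)
            ((intervalIntegrable_zpow (Or.inr hnotr)).const_mul A)
          intro x _
          rw [hzpow_id]
          exact min_le_right _ _
      _ = A * (δ ^ (-3:ℤ) - M ^ (-3:ℤ)) / 3 := by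
          rw [intervalIntegral.integral_const_mul,
            integral_zpow (Or.inr ⟨by norm_num, hnotr⟩)]
          norm_num
          ring
      _ ≤ A * δ ^ (-3:ℤ) / 3 := by
          have hM3 : (0:ℝ) ≤ M ^ (-3:ℤ) := by positivity
          have hδ3 : (0:ℝ) ≤ δ ^ (-3:ℤ) := by positivity
          have h := mul_le_mul_of_nonneg_left (by linarith : δ ^ (-3:ℤ) - M ^ (-3:ℤ) ≤ δ ^ (-3:ℤ)) hA0
          linarith
  -- left piece
  have hnl : -M ≤ -δ := by linarith
  have hnotl : (0:ℝ) ∉ Set.uIcc (-M) (-δ) := by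
    rw [Set.uIcc_of_le hnl]; intro h; exact absurd h.2 (by linarith)
  have hleft : (∫ x in (-M)..(-δ), g₀ x) ≤ A * δ ^ (-3:ℤ) / 3 := by
    calc (∫ x in (-M)..(-δ), g₀ x) ≤ ∫ x in (-M)..(-δ), A * x ^ (-4:ℤ) := by
          apply intervalIntegral.integral_mono_on hnl (hg₀int _ _)
            ((intervalIntegrable_zpow (Or.inr hnotl)).const_mul A)
          intro x _
          rw [hzpow_id]
          exact min_le_right _ _
      _ = A * (δ ^ (-3:ℤ) - M ^ (-3:ℤ)) / 3 := by
          have hodd : Odd (-3:ℤ) := by decide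
          rw [intervalIntegral.integral_const_mul,
            integral_zpow (Or.inr ⟨by norm_num, hnotl⟩),
            show (-4:ℤ) + 1 = -3 by norm_num,
            hodd.neg_zpow δ, hodd.neg_zpow M]
          norm_num
          ring
      _ ≤ A * δ ^ (-3:ℤ) / 3 := by
          have hM3 : (0:ℝ) ≤ M ^ (-3:ℤ) := by positivity
          have hδ3 : (0:ℝ) ≤ δ ^ (-3:ℤ) := by positivity
          have h := mul_le_mul_of_nonneg_left (by linarith : δ ^ (-3:ℤ) - M ^ (-3:ℤ) ≤ δ ^ (-3:ℤ)) hA0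
          linarith
  -- arithmetic conversions
  have hδ3c : δ ^ (-3:ℤ) = X ^ (3*c) := by
    rw [hδdef, ← Real.rpow_intCast (X ^ (-c)) (-3), ← Real.rpow_mul hX0.le]
    norm_num
    congr 1
    ring
  have hA' : A = X ^ (4 - 4*c) := by
    rw [hAdef, ← Real.rpow_natCast (X ^ (1-c)) 4, ← Real.rpow_mul hX0.le]
    congr 1; ring
  have hX4 : (X:ℝ) ^ (4:ℕ) = X ^ (4:ℝ) := (Real.rpow_natCast X 4).symm
  have hAδ : A * δ ^ (-3:ℤ) = X ^ (4 - c) := by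
    rw [hδ3c, hA', ← Real.rpow_add hX0]; congr 1; ring
  have hδX4 : δ * X ^ (4:ℕ) = X ^ (4 - c) := by
    rw [hX4, hδdef, ← Real.rpow_add hX0]; congr 1; ring
  -- log bound
  have hlog : (1:ℝ) ≤ Real.log X := by
    rw [Real.le_log_iff_exp_le hX0]
    have := Real.exp_one_lt_d9
    linarith
  have hlog5 : (1:ℝ) ≤ Real.log X ^ 5 := one_le_pow₀ hlog
  have hXpow : (0:ℝ) < X ^ (4 - c) := Real.rpow_pos_of_pos hX0 _
  calc (∫ x in Set.Icc (-τ) τ,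
      ‖∫ t in X..(2 * X), Complex.exp (2 * Real.pi * Complex.I * ((t ^ c * x : ℝ) : ℂ))‖ ^ 4)
      ≤ ∫ x in Set.Icc (-M) M, g₀ x := le_trans hstep1 hstep2
    _ = (∫ x in (-M)..(-δ), g₀ x) + ((∫ x in (-δ)..δ, g₀ x) + ∫ x in δ..M, g₀ x) := by
        rw [hIcc, e1, e2]
    _ ≤ A * δ ^ (-3:ℤ) / 3 + (2 * δ * X ^ (4:ℕ) + A * δ ^ (-3:ℤ) / 3) := by
        gcongr
    _ ≤ 3 * X ^ (4 - c) * 1 := by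
        rw [show (2:ℝ) * δ * X ^ (4:ℕ) = 2 * (δ * X ^ (4:ℕ)) by ring, hδX4]
        rw [show A * δ ^ (-3:ℤ) / 3 = (A * δ ^ (-3:ℤ)) / 3 by ring, hAδ]
        nlinarith
    _ ≤ 3 * X ^ (4 - c) * Real.log X ^ 5 := by
        have h3X : (0:ℝ) ≤ 3 * X ^ (4 - c) := by positivity
        calc 3 * X ^ (4 - c) * 1 ≤ 3 * X ^ (4 - c) * Real.log X ^ 5 :=
          mul_le_mul_of_nonneg_left hlog5 h3X
end

section
/- Let c > 1 with c not an integer, and let τ > 0 satisfy τ ≤ X^{1−c} for a large real number X. Then the number U of integer quadruples (n₁, n₂, n₃, n₄) with X < n₁, n₂, n₃, n₄ ≤ 2X and |n₁^c + n₂^c − n₃^c − n₄^c| ≤ 1/τ satisfies U ≪ X³ + τ^{−1} X^{4−c}, where the implied constant depends only on c. -/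
/-! For fixed `n₁, n₂, n₃` every admissible `n₄` satisfies `|B - n₄ ^ c| ≤ 1/τ` with
`B = n₁ ^ c + n₂ ^ c - n₃ ^ c`. On `[X, ∞)` the derivative of `t ↦ t ^ c` is at least
`c X ^ (c - 1)`, so two admissible `n₄` are at most `2 / (τ c X ^ (c - 1))` apart, leaving at most
`1 + (2/c) τ⁻¹ X ^ (1 - c)` choices of `n₄`. Summing over the at most `(2X)³` triples gives the bound.
-/

open Finset

theorem Finset.card_filter_product_le {α β : Type*} (s : Finset α) (t : Finset β)
    (p : α → β → Prop) [∀ a b, Decidable (p a b)] {N : ℕ}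
    (h : ∀ a ∈ s, #{b ∈ t | p a b} ≤ N) : #{x ∈ s ×ˢ t | p x.1 x.2} ≤ #s * N := by
  rw [card_filter, sum_product]
  simpa only [← card_filter, smul_eq_mul] using sum_le_card_nsmul s _ N h

theorem Finset.card_le_floor_add_one_of_sub_le {T : Finset ℕ} {L : ℝ}
    (h : ∀ m ∈ T, ∀ m' ∈ T, (m : ℝ) - m' ≤ L) : #T ≤ ⌊L⌋₊ + 1 := by
  rcases T.eq_empty_or_nonempty with rfl | hT
  · simp
  have hsub : T ⊆ Icc (T.min' hT) (T.min' hT + ⌊L⌋₊) := by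
    intro m hm
    have hle := T.min'_le m hm
    have : m - T.min' hT ≤ ⌊L⌋₊ :=
      Nat.le_floor (by rw [Nat.cast_sub hle]; exact h m hm _ (T.min'_mem hT))
    rw [mem_Icc]
    omega
  simpa [Nat.card_Icc, Nat.add_sub_cancel_left, add_assoc] using card_le_card hsub

theorem Real.mul_rpow_sub_one_mul_sub_le_rpow_sub_rpow {c a b : ℝ} (hc : 1 ≤ c) (ha : 0 < a)
    (hab : a ≤ b) : c * a ^ (c - 1) * (b - a) ≤ b ^ c - a ^ c := by
  have hba : 1 ≤ b / a := (one_le_div ha).2 hab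
  -- Bernoulli's inequality `1 + c (b/a - 1) ≤ (b/a) ^ c`, multiplied by `a ^ c`
  have hB := one_add_mul_self_le_rpow_one_add (s := b / a - 1) (by linarith) hc
  rw [add_sub_cancel, Real.div_rpow (ha.le.trans hab) ha.le,
    le_div_iff₀ (Real.rpow_pos_of_pos ha c)] at hB
  calc c * a ^ (c - 1) * (b - a) = (1 + c * (b / a - 1)) * a ^ c - a ^ c := by
        rw [Real.rpow_sub_one ha.ne']; field_simp; ring
    _ ≤ b ^ c - a ^ c := by linarith

theorem sub_le_of_abs_sub_rpow_le {c X B δ m m' : ℝ} (hc : 1 ≤ c) (hX : 0 < X) (hm' : X ≤ m')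
    (hm'm : m' ≤ m) (h : |B - m ^ c| ≤ δ) (h' : |B - m' ^ c| ≤ δ) :
    m - m' ≤ 2 * δ / (c * X ^ (c - 1)) := by
  rw [le_div_iff₀ (by positivity)]
  have hXm' : X ^ (c - 1) ≤ m' ^ (c - 1) := Real.rpow_le_rpow hX.le hm' (by linarith)
  calc (m - m') * (c * X ^ (c - 1)) ≤ c * m' ^ (c - 1) * (m - m') := by
        nlinarith [mul_le_mul_of_nonneg_left hXm' (by nlinarith : 0 ≤ c * (m - m'))]
    _ ≤ m ^ c - m' ^ c := Real.mul_rpow_sub_one_mul_sub_le_rpow_sub_rpow hc (hX.trans_le hm') hm'm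
    _ ≤ 2 * δ := by linarith [abs_le.1 h, abs_le.1 h']

theorem card_filter_abs_sub_rpow_le {c X B δ : ℝ} (hc : 1 ≤ c) (hX : 0 < X) {s : Finset ℕ}
    (hs : ∀ m ∈ s, X ≤ m) :
    #{m ∈ s | |B - ((m : ℕ) : ℝ) ^ c| ≤ δ} ≤ ⌊2 * δ / (c * X ^ (c - 1))⌋₊ + 1 := by
  refine card_le_floor_add_one_of_sub_le fun m hm m' hm' => ?_
  rw [mem_filter] at hm hm'
  rcases le_total (m' : ℝ) m with hle | hle
  · exact sub_le_of_abs_sub_rpow_le hc hX (hs m' hm'.1) hle hm.2 hm'.2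
  · have : 0 ≤ δ := (abs_nonneg _).trans hm.2
    have : 0 ≤ 2 * δ / (c * X ^ (c - 1)) := by positivity
    linarith

theorem stmt_6_general (c : ℝ) (hc1 : 1 < c) :
    ∃ C X₀ : ℝ, 0 < C ∧ ∀ X τ : ℝ, X₀ ≤ X → 0 < τ → τ ≤ X ^ (1 - c) →
      (((((Finset.Ioc ⌊X⌋₊ ⌊2 * X⌋₊) ×ˢ (Finset.Ioc ⌊X⌋₊ ⌊2 * X⌋₊)) ×ˢ
          ((Finset.Ioc ⌊X⌋₊ ⌊2 * X⌋₊) ×ˢ (Finset.Ioc ⌊X⌋₊ ⌊2 * X⌋₊))).filter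
        (fun q => |(q.1.1 : ℝ) ^ c + (q.1.2 : ℝ) ^ c - (q.2.1 : ℝ) ^ c - (q.2.2 : ℝ) ^ c| ≤
          1 / τ)).card : ℝ) ≤ C * (X ^ 3 + τ⁻¹ * X ^ (4 - c)) := by
  refine ⟨8 + 16 / c, 1, by positivity, fun X τ hX hτ _ => ?_⟩
  have hX0 : 0 < X := one_pos.trans_le hX
  set P := Ioc ⌊X⌋₊ ⌊2 * X⌋₊
  set N := ⌊2 * (1 / τ) / (c * X ^ (c - 1))⌋₊ + 1
  have hP : ∀ m ∈ P, X ≤ m := fun m hm => ((Nat.floor_lt hX0.le).1 (mem_Ioc.1 hm).1).le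
  have hcount := card_filter_product_le (P ×ˢ P) (P ×ˢ P)
    (fun a b => |(a.1 : ℝ) ^ c + (a.2 : ℝ) ^ c - (b.1 : ℝ) ^ c - (b.2 : ℝ) ^ c| ≤ 1 / τ)
    fun a _ => card_filter_product_le P P
      (fun d m => |(a.1 : ℝ) ^ c + (a.2 : ℝ) ^ c - (d : ℝ) ^ c - (m : ℝ) ^ c| ≤ 1 / τ)
      fun _ _ => card_filter_abs_sub_rpow_le hc1.le hX0 hP
  have hPcard : (#P : ℝ) ≤ 2 * X := by
    rw [Nat.card_Ioc]
    exact (Nat.cast_le.2 (Nat.sub_le _ _)).trans (Nat.floor_le (by positivity))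
  have hN : (N : ℝ) ≤ 1 + 2 / c * τ⁻¹ * X ^ (1 - c) := by
    have hL : 2 * (1 / τ) / (c * X ^ (c - 1)) = 2 / c * τ⁻¹ * X ^ (1 - c) := by
      rw [show 1 - c = -(c - 1) by ring, Real.rpow_neg hX0.le]
      field_simp
    have := Nat.floor_le (a := 2 * (1 / τ) / (c * X ^ (c - 1))) (by positivity)
    push_cast [N]
    linarith
  have hX4 : X ^ (4 - c) = X ^ (1 - c) * X ^ 3 := by
    rw [show 4 - c = (1 - c) + 3 by ring, Real.rpow_add hX0]
    norm_cast
  calc _ ≤ ((#P * #P * (#P * N) : ℕ) : ℝ) := by rw [← card_product]; exact_mod_cast hcount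
    _ ≤ (2 * X) ^ 3 * (1 + 2 / c * τ⁻¹ * X ^ (1 - c)) := by
        push_cast
        rw [show (#P : ℝ) * #P * (#P * N) = #P ^ 3 * N by ring]
        gcongr
    _ = 8 * X ^ 3 + 16 / c * (τ⁻¹ * X ^ (4 - c)) := by rw [hX4]; ring
    _ ≤ (8 + 16 / c) * (X ^ 3 + τ⁻¹ * X ^ (4 - c)) := by
        have : 0 ≤ τ⁻¹ * X ^ (4 - c) := by positivity
        have : 0 ≤ X ^ 3 := by positivity
        have : 0 ≤ 16 / c := by positivity
        nlinarith

/-- Counting quadruples with `|n₁^c + n₂^c − n₃^c − n₄^c| ≤ 1/τ`. -/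
theorem stmt_6 (c : ℝ) (hc1 : 1 < c) (hc : ∀ k : ℤ, c ≠ k) :
    ∃ C X₀ : ℝ, 0 < C ∧ ∀ X τ : ℝ, X₀ ≤ X → 0 < τ → τ ≤ X ^ (1 - c) →
      (((((Finset.Ioc ⌊X⌋₊ ⌊2 * X⌋₊) ×ˢ (Finset.Ioc ⌊X⌋₊ ⌊2 * X⌋₊)) ×ˢ
          ((Finset.Ioc ⌊X⌋₊ ⌊2 * X⌋₊) ×ˢ (Finset.Ioc ⌊X⌋₊ ⌊2 * X⌋₊))).filter
        (fun q => |(q.1.1 : ℝ) ^ c + (q.1.2 : ℝ) ^ c - (q.2.1 : ℝ) ^ c - (q.2.2 : ℝ) ^ c| ≤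
          1 / τ)).card : ℝ) ≤ C * (X ^ 3 + τ⁻¹ * X ^ (4 - c)) :=
  stmt_6_general c hc1
end

section
/- Suppose L(Q) = ∑_{i=1}^n A_i Q^{a_i} + ∑_{j=1}^m B_j Q^{−b_j}, where A_i, B_j, a_i, b_j are all positive reals, and suppose Q₁ ≤ Q₂. Then there exists Q* ∈ [Q₁, Q₂] such that L(Q*) ≪ ∑_{i=1}^n A_i Q₁^{a_i} + ∑_{j=1}^m B_j Q₂^{−b_j} + ∑_{i=1}^n ∑_{j=1}^m (A_i^{b_j} B_j^{a_i})^{1/(a_i + b_j)}, where the implied constant depends only on n and m. -/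
open Finset

/-! With `F(Q) = ∑ Aᵢ Q^{aᵢ}` and `G(Q) = ∑ Bⱼ Q^{-bⱼ}`, either `F ≥ G` at `Q₁` or `F ≤ G` at `Q₂`,
and then the endpoint does the job; otherwise `F = G` at some `Q` by the intermediate value theorem.
There `F + G = 2 min(F, G) ≤ 2 ∑ᵢⱼ min(Aᵢ Q^{aᵢ}, Bⱼ Q^{-bⱼ})`, and each such minimum is at most
its weighted geometric mean `(Aᵢ^{bⱼ} Bⱼ^{aᵢ})^{1/(aᵢ+bⱼ)}`, in which `Q` cancels. So the constant
`2` works for all `n` and `m`. -/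

theorem min_sum_le_sum_sum_min {ι κ α : Type*} [AddCommMonoid α] [LinearOrder α]
    [IsOrderedAddMonoid α] (s : Finset ι) (t : Finset κ) {x : ι → α} {y : κ → α}
    (hx : ∀ i ∈ s, 0 ≤ x i) (hy : ∀ j ∈ t, 0 ≤ y j) :
    min (∑ i ∈ s, x i) (∑ j ∈ t, y j) ≤ ∑ i ∈ s, ∑ j ∈ t, min (x i) (y j) := by
  have hmin : ∀ i ∈ s, ∀ j ∈ t, 0 ≤ min (x i) (y j) := fun i hi j hj =>
    le_min (hx i hi) (hy j hj)
  -- Either row `i` of the double sum is `∑ y` itself, or each `x i` is a term `min (x i) (y j)` of its row.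
  by_cases h : ∃ i ∈ s, ∀ j ∈ t, y j ≤ x i
  · obtain ⟨i, hi, hyx⟩ := h
    calc min _ _ ≤ ∑ j ∈ t, y j := min_le_right _ _
      _ = ∑ j ∈ t, min (x i) (y j) := sum_congr rfl fun j hj => (min_eq_right (hyx j hj)).symm
      _ ≤ _ := single_le_sum (f := fun i => ∑ j ∈ t, min (x i) (y j))
          (fun i hi => sum_nonneg (hmin i hi)) hi
  · push Not at h
    calc min _ _ ≤ ∑ i ∈ s, x i := min_le_left _ _
      _ ≤ _ := sum_le_sum fun i hi => by
        obtain ⟨j, hj, hxy⟩ := h i hi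
        calc x i = min (x i) (y j) := (min_eq_left hxy.le).symm
          _ ≤ _ := single_le_sum (hmin i hi) hj

theorem Real.min_le_rpow_mul_rpow {x y θ : ℝ} (hx : 0 ≤ x) (hy : 0 ≤ y) (hθ₀ : 0 ≤ θ)
    (hθ₁ : θ ≤ 1) : min x y ≤ x ^ θ * y ^ (1 - θ) := by
  have h₀ : 0 ≤ min x y := le_min hx hy
  calc min x y = min x y ^ θ * min x y ^ (1 - θ) := by
        rw [← Real.rpow_add' h₀ (by norm_num), add_sub_cancel, Real.rpow_one]
    _ ≤ x ^ θ * y ^ (1 - θ) := by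
        have : 0 ≤ 1 - θ := by linarith
        gcongr
        exacts [min_le_left x y, min_le_right x y]

theorem Real.min_mul_rpow_mul_rpow_neg_le {A B α β Q : ℝ} (hA : 0 < A) (hB : 0 < B)
    (hα : 0 < α) (hβ : 0 < β) (hQ : 0 < Q) :
    min (A * Q ^ α) (B * Q ^ (-β)) ≤ (A ^ β * B ^ α) ^ (1 / (α + β)) := by
  have hαβ : 0 < α + β := by linarith
  calc min (A * Q ^ α) (B * Q ^ (-β))
      ≤ (A * Q ^ α) ^ (β / (α + β)) * (B * Q ^ (-β)) ^ (1 - β / (α + β)) :=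
        Real.min_le_rpow_mul_rpow (by positivity) (by positivity) (by positivity)
          ((div_le_one hαβ).2 (by linarith))
    _ = (A ^ β * B ^ α) ^ (1 / (α + β)) := by
        rw [one_sub_div hαβ.ne', add_sub_cancel_right, Real.mul_rpow hA.le (by positivity),
          Real.mul_rpow hB.le (by positivity), Real.mul_rpow (by positivity) (by positivity),
          ← Real.rpow_mul hQ.le, ← Real.rpow_mul hQ.le, ← Real.rpow_mul hA.le,
          ← Real.rpow_mul hB.le, mul_one_div, mul_one_div]
        have hQ_cancel : Q ^ (α * (β / (α + β))) * Q ^ (-β * (α / (α + β))) = 1 := by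
          rw [← Real.rpow_add hQ, ← Real.rpow_zero Q]
          congr 1
          field_simp
          ring
        linear_combination (A ^ (β / (α + β)) * B ^ (α / (α + β))) * hQ_cancel

theorem exists_mem_Icc_add_le_two_mul_max_or_eq {α : Type*} [ConditionallyCompleteLinearOrder α]
    [TopologicalSpace α] [OrderTopology α] [DenselyOrdered α] {f g : α → ℝ} {a b : α}
    (hab : a ≤ b) (hf : ContinuousOn f (Set.Icc a b)) (hg : ContinuousOn g (Set.Icc a b)) :
    ∃ x ∈ Set.Icc a b, f x + g x ≤ 2 * max (f a) (g b) ∨ f x = g x := by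
  by_cases ha : g a ≤ f a
  · exact ⟨a, Set.left_mem_Icc.2 hab, Or.inl (by linarith [le_max_left (f a) (g b)])⟩
  by_cases hb : f b ≤ g b
  · exact ⟨b, Set.right_mem_Icc.2 hab, Or.inl (by linarith [le_max_right (f a) (g b)])⟩
  push Not at ha hb
  have h₀ : (0 : ℝ) ∈ Set.Icc (f a - g a) (f b - g b) := ⟨by linarith, by linarith⟩
  obtain ⟨x, hx, hfg⟩ := intermediate_value_Icc hab (hf.sub hg) h₀
  exact ⟨x, hx, Or.inr (sub_eq_zero.1 hfg)⟩

/-- Graham–Kolesnik optimization lemma (Lemma 2.4). -/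
theorem stmt_10 (n m : ℕ) :
    ∃ C : ℝ, 0 < C ∧ ∀ (A a : Fin n → ℝ) (B b : Fin m → ℝ),
      (∀ i, 0 < A i) → (∀ i, 0 < a i) → (∀ j, 0 < B j) → (∀ j, 0 < b j) →
      ∀ Q₁ Q₂ : ℝ, 0 < Q₁ → Q₁ ≤ Q₂ →
        ∃ Q ∈ Set.Icc Q₁ Q₂,
          (∑ i, A i * Q ^ (a i)) + (∑ j, B j * Q ^ (-(b j))) ≤
            C * ((∑ i, A i * Q₁ ^ (a i)) + (∑ j, B j * Q₂ ^ (-(b j))) +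
              ∑ i, ∑ j, (A i ^ (b j) * B j ^ (a i)) ^ (1 / (a i + b j))) := by
  refine ⟨2, two_pos, fun A a B b hA ha hB hb Q₁ Q₂ hQ₁ hQ₁₂ => ?_⟩
  have hQ₀ : ∀ Q ∈ Set.Icc Q₁ Q₂, 0 < Q := fun Q hQ => hQ₁.trans_le hQ.1
  have hF : ContinuousOn (fun Q => ∑ i, A i * Q ^ (a i)) (Set.Icc Q₁ Q₂) := by
    fun_prop (disch := exact fun Q hQ => (hQ₀ Q hQ).ne')
  have hG : ContinuousOn (fun Q => ∑ j, B j * Q ^ (-(b j))) (Set.Icc Q₁ Q₂) := by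
    fun_prop (disch := exact fun Q hQ => (hQ₀ Q hQ).ne')
  have hF₁ : 0 ≤ ∑ i, A i * Q₁ ^ (a i) :=
    sum_nonneg fun i _ => mul_nonneg (hA i).le (Real.rpow_nonneg hQ₁.le _)
  have hG₂ : 0 ≤ ∑ j, B j * Q₂ ^ (-(b j)) :=
    sum_nonneg fun j _ => mul_nonneg (hB j).le (Real.rpow_nonneg (hQ₁.trans_le hQ₁₂).le _)
  have hT : 0 ≤ ∑ i, ∑ j, (A i ^ (b j) * B j ^ (a i)) ^ (1 / (a i + b j)) :=
    sum_nonneg fun i _ => sum_nonneg fun j _ => by have := hA i; have := hB j; positivity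
  obtain ⟨Q, hQ, hQ_max | hQ_eq⟩ := exists_mem_Icc_add_le_two_mul_max_or_eq hQ₁₂ hF hG
  · refine ⟨Q, hQ, hQ_max.trans ?_⟩
    gcongr
    exact max_le (by linarith) (by linarith)
  · refine ⟨Q, hQ, ?_⟩
    have hAQ : ∀ i ∈ univ, 0 ≤ A i * Q ^ (a i) := fun i _ =>
      mul_nonneg (hA i).le (Real.rpow_nonneg (hQ₀ Q hQ).le _)
    have hBQ : ∀ j ∈ univ, 0 ≤ B j * Q ^ (-(b j)) := fun j _ =>
      mul_nonneg (hB j).le (Real.rpow_nonneg (hQ₀ Q hQ).le _)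
    calc _ = 2 * min (∑ i, A i * Q ^ (a i)) (∑ j, B j * Q ^ (-(b j))) := by
          rw [hQ_eq, min_self, two_mul]
      _ ≤ 2 * ∑ i, ∑ j, min (A i * Q ^ (a i)) (B j * Q ^ (-(b j))) := by
          gcongr
          exact min_sum_le_sum_sum_min _ _ hAQ hBQ
      _ ≤ 2 * ∑ i, ∑ j, (A i ^ (b j) * B j ^ (a i)) ^ (1 / (a i + b j)) := by
          gcongr with i _ j _
          exact Real.min_mul_rpow_mul_rpow_neg_le (hA i) (hB j) (ha i) (hb j) (hQ₀ Q hQ)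
      _ ≤ _ := by gcongr; linarith
end
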